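/- arXiv:0710.2352 — 8 statements merged into one kernel-verified Lean document; each statement's English description precedes it below -/
import Mathlib

section
/- Let S ⊆ (0,∞) be an infinite countable set of positive reals, and assume that the reverse order > does not induce a well-ordering on S (i.e., some nonempty subset of S has no greatest element; equivalently, S contains an infinite strictly increasing sequence). Then there exists a map χ : Q_S → ℕ such that for every isometric copy X of Q_S inside Q_S, the restriction of χ to X is surjective onto ℕ. -/
/-- The ultrametric Urysohn space with distances in `S`, realized as the
set of finitely supported functions from `S` to `ℕ`. -/
def QS (S : Set ℝ) : Type := {x : S → ℕ // (Function.support x).Finite}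

/-- The ultrametric on `QS S`: the largest `s ∈ S` at which `x` and `y`
differ, and `0` if `x = y` (the supremum of the empty set of reals is `0`). -/
noncomputable def qdist (S : Set ℝ) (x y : QS S) : ℝ :=
  sSup (Subtype.val '' {s : S | x.1 s ≠ y.1 s})

/-- `Y ⊆ QS S'` is an isometric copy of `X ⊆ QS S`. -/
def IsCopyIn (S S' : Set ℝ) (X : Set (QS S)) (Y : Set (QS S')) : Prop :=
  ∃ e : X → QS S', Function.Injective e ∧ Set.range e = Y ∧
    ∀ a b : X, qdist S' (e a) (e b) = qdist S a.1 b.1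

/-- `X` is an isometric copy of `QS S` inside `QS S`. -/
def IsCopyOfQS (S : Set ℝ) (X : Set (QS S)) : Prop :=
  ∃ e : QS S → QS S, Function.Injective e ∧ Set.range e = X ∧
    ∀ x y, qdist S (e x) (e y) = qdist S x y

/-- The reverse order `>` well-orders `S`: every nonempty subset of `S`
has a greatest element. -/
def RevWellOrdered (S : Set ℝ) : Prop :=
  ∀ T ⊆ S, T.Nonempty → ∃ m ∈ T, ∀ t ∈ T, t ≤ m

/-- `b` is a metric ball of `QS S` with radius `r ∈ S ∪ {0}`. -/
def IsBall (S : Set ℝ) (b : Set (QS S)) (r : ℝ) : Prop :=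
  (r ∈ S ∨ r = 0) ∧ ∃ x : QS S, b = {y | qdist S x y ≤ r}

/-- `r⁻`: the greatest element of `S` below `r` (and `0` if there is none). -/
noncomputable def rminus (S : Set ℝ) (r : ℝ) : ℝ := sSup {t | t ∈ S ∧ t < r}

/-- `A` is small in the ball `b` of radius `r`. -/
def SmallIn (S : Set ℝ) (A b : Set (QS S)) (r : ℝ) : Prop :=
  (r = 0 ∧ A ∩ b = ∅) ∨
  (0 < r ∧ ∃ F : Finset (QS S), A ∩ b ⊆ ⋃ c ∈ F, {y | qdist S c y ≤ rminus S r})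

/-- `χ` admits at most `l` values on copies of `X` inside a copy of `QS S'`,
for every coloring with `k` colors. -/
def BRDbound (S S' : Set ℝ) (X : Set (QS S)) (l : ℕ) : Prop :=
  ∀ k : ℕ, 0 < k → ∀ χ : Set (QS S') → Fin k,
    ∃ Q : Set (QS S'), IsCopyOfQS S' Q ∧
      (χ '' {Y | IsCopyIn S S' X Y ∧ Y ⊆ Q}).ncard ≤ l

/-- `X ⊆ QS S` has big Ramsey degree `l` in `U_{S'}`. -/
def HasBigRamseyDegree (S S' : Set ℝ) (X : Set (QS S)) (l : ℕ) : Prop :=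
  IsLeast {m : ℕ | 0 < m ∧ BRDbound S S' X m} l

/-- From failure of reverse well-ordering, extract a strictly increasing
sequence in `S`. -/
lemma exists_strictMono_of_not_revWellOrdered (S : Set ℝ) (hnwo : ¬ RevWellOrdered S) :
    ∃ s : ℕ → ℝ, StrictMono s ∧ ∀ k, s k ∈ S := by
  rw [RevWellOrdered] at hnwo
  push_neg at hnwo
  obtain ⟨T, hTS, hTne, hT⟩ := hnwo
  choose g hg1 hg2 using hT
  obtain ⟨t0, ht0⟩ := hTne
  let F : {t // t ∈ T} → {t // t ∈ T} := fun p => ⟨g p.1 p.2, hg1 p.1 p.2⟩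
  let q : ℕ → {t // t ∈ T} := fun k => F^[k] ⟨t0, ht0⟩
  refine ⟨fun k => (q k).1, strictMono_nat_of_lt_succ ?_, fun k => hTS (q k).2⟩
  intro k
  have hq : q (k + 1) = F (q k) := Function.iterate_succ_apply' F k _
  have := hg2 (q k).1 (q k).2
  calc (q k).1 < (F (q k)).1 := this
  _ = (q (k+1)).1 := by rw [hq]

/-- The set of coordinates where two elements of `QS S` differ is finite. -/
lemma qs_diffset_finite {S : Set ℝ} (x y : QS S) :
    ({s : S | x.1 s ≠ y.1 s}).Finite := by
  apply Set.Finite.subset (x.2.union y.2)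
  intro t ht
  by_contra h
  simp only [Set.mem_union, Function.mem_support, not_or, not_not] at h
  exact ht (h.1.trans h.2.symm)

/-- The maximum in the definition of `qdist` is attained, and bounds all
differences. -/
lemma qdist_spec {S : Set ℝ} {x y : QS S} (hne : x ≠ y) :
    (∃ t : S, (t : ℝ) = qdist S x y ∧ x.1 t ≠ y.1 t) ∧
      ∀ t : S, x.1 t ≠ y.1 t → (t : ℝ) ≤ qdist S x y := by
  have hfin : (Subtype.val '' {s : S | x.1 s ≠ y.1 s}).Finite :=
    (qs_diffset_finite x y).image _
  have hne' : (Subtype.val '' {s : S | x.1 s ≠ y.1 s}).Nonempty := by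
    have hxy : x.1 ≠ y.1 := fun h => hne (Subtype.ext h)
    obtain ⟨t, ht⟩ := Function.ne_iff.mp hxy
    exact ⟨t.1, t, ht, rfl⟩
  constructor
  · obtain ⟨t, ht, htv⟩ := hne'.csSup_mem hfin
    exact ⟨t, htv, ht⟩
  · intro t ht
    exact le_csSup hfin.bddAbove ⟨t, ht, rfl⟩

/-- If `S ⊆ (0,∞)` is infinite countable and `>` does not
well-order `S`, there is `χ : Q_S → ℕ` whose restriction to any isometric
copy of `Q_S` inside `Q_S` is surjective onto `ℕ`. -/
theorem stmt0 (S : Set ℝ) (hpos : S ⊆ Set.Ioi 0) (hcount : S.Countable)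
    (hinf : S.Infinite) (hnwo : ¬ RevWellOrdered S) :
    ∃ χ : QS S → ℕ, ∀ X : Set (QS S), IsCopyOfQS S X →
      ∀ n : ℕ, ∃ x ∈ X, χ x = n := by
  classical
  obtain ⟨s, hs, hsS⟩ := exists_strictMono_of_not_revWellOrdered S hnwo
  -- `D y` : support of `y` below the limit of the increasing sequence
  set D : QS S → Set ℝ := fun y => {r | ∃ hr : r ∈ S, y.1 ⟨r, hr⟩ ≠ 0 ∧ ∃ k, r < s k}
    with hDdef
  have hDfin : ∀ y : QS S, (D y).Finite := by
    intro y
    apply Set.Finite.subset (y.2.image Subtype.val)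
    rintro r ⟨hr, hne, -⟩
    exact ⟨⟨r, hr⟩, hne, rfl⟩
  set c : QS S → ℕ := fun y => Set.ncard {k | s k ≤ sSup (D y)} with hcdef
  refine ⟨fun y => c y - (Nat.sqrt (c y)) ^ 2, ?_⟩
  intro X hX n
  obtain ⟨e, einj, erange, eiso⟩ := hX
  -- the zero point and the "unit vectors" `z i`
  set z0 : QS S := ⟨fun _ => 0, by
    have : Function.support (fun _ : S => (0 : ℕ)) = ∅ := Function.support_zero
    rw [this]; exact Set.finite_empty⟩ with hz0def
  set z : ℕ → QS S := fun i => ⟨fun t => if (t : ℝ) = s i then 1 else 0, by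
    apply Set.Finite.subset (Set.finite_singleton (⟨s i, hsS i⟩ : S))
    intro t ht
    simp only [Function.mem_support, ne_eq, ite_eq_right_iff, not_forall] at ht
    exact Set.mem_singleton_iff.mpr (Subtype.ext ht.choose)⟩ with hzdef
  have hzval : ∀ i (t : S), (z i).1 t = if (t : ℝ) = s i then 1 else 0 := fun _ _ => rfl
  have hz0val : ∀ t : S, z0.1 t = 0 := fun _ => rfl
  have hzdist : ∀ i, qdist S z0 (z i) = s i := by
    intro i
    have himg : Subtype.val '' {t : S | z0.1 t ≠ (z i).1 t} = {s i} := by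
      ext r
      simp only [Set.mem_image, Set.mem_setOf_eq, Set.mem_singleton_iff]
      constructor
      · rintro ⟨t, ht, rfl⟩
        by_contra h
        simp only [hz0val, hzval, if_neg h] at ht
        exact ht rfl
      · rintro rfl
        refine ⟨⟨s i, hsS i⟩, ?_, rfl⟩
        simp only [hz0val, hzval, if_pos rfl]
        exact zero_ne_one
    rw [qdist, himg, csSup_singleton]
  -- choose I with D (e z0) ⊆ Iio (s I)
  have hIex : ∃ I : ℕ, ∀ r ∈ D (e z0), r < s I := by
    rcases Set.eq_empty_or_nonempty (D (e z0)) with h | h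
    · exact ⟨0, fun r hr => absurd hr (h ▸ Set.notMem_empty r)⟩
    · obtain ⟨-, -, k, hk⟩ := h.csSup_mem (hDfin _)
      refine ⟨k, fun r hr => lt_of_le_of_lt ?_ hk⟩
      exact le_csSup (hDfin _).bddAbove hr
  obtain ⟨I, hI⟩ := hIex
  -- arithmetic setup
  set K : ℕ := max I n + 1 with hKdef
  have hK2 : K ≤ K ^ 2 := Nat.le_self_pow two_ne_zero K
  have hK1 : 1 ≤ K ^ 2 := le_trans (by omega) hK2
  set i : ℕ := K ^ 2 + n - 1 with hidef
  have hi1 : i + 1 = K ^ 2 + n := by omega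
  have hiI : I ≤ i := by
    have : I + 1 ≤ K := by omega
    omega
  have hsqrt : Nat.sqrt (i + 1) = K := by
    rw [hi1]
    apply le_antisymm
    · have : K ^ 2 + n < (K + 1) ^ 2 := by nlinarith [le_max_right I n]
      exact Nat.lt_succ_iff.mp (Nat.sqrt_lt'.mpr this)
    · exact Nat.le_sqrt'.mpr (by omega)
  -- the key point `e (z i)`
  have hzne : z0 ≠ z i := by
    intro h
    have := congrArg (fun w : QS S => w.1 ⟨s i, hsS i⟩) h
    simp only [hz0val, hzval, if_pos rfl] at this
    exact zero_ne_one this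
  have hene : e z0 ≠ e (z i) := fun h => hzne (einj h)
  have hd : qdist S (e z0) (e (z i)) = s i := by rw [eiso, hzdist]
  obtain ⟨⟨t, htv, htne⟩, hub⟩ := qdist_spec hene
  rw [hd] at htv hub
  have hsiI : s I ≤ s i := hs.le_iff_le.mpr hiI
  -- e z0 vanishes at s i
  have hez0 : (e z0).1 ⟨s i, hsS i⟩ = 0 := by
    by_contra h
    have : s i ∈ D (e z0) := ⟨hsS i, h, i + 1, hs (Nat.lt_succ_self i)⟩
    have := hI _ this
    linarith
  -- e (z i) does not vanish at s i
  have hezi : (e (z i)).1 ⟨s i, hsS i⟩ ≠ 0 := by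
    have ht' : t = ⟨s i, hsS i⟩ := Subtype.ext htv
    rw [ht', hez0] at htne
    exact htne.symm
  -- s i is the greatest element of D (e (z i))
  have hgreat : IsGreatest (D (e (z i))) (s i) := by
    constructor
    · exact ⟨hsS i, hezi, i + 1, hs (Nat.lt_succ_self i)⟩
    · rintro r ⟨hrS, hrne, k, hrk⟩
      by_contra hcon
      push_neg at hcon
      have hag : (e z0).1 ⟨r, hrS⟩ = (e (z i)).1 ⟨r, hrS⟩ := by
        by_contra h'
        exact absurd (hub ⟨r, hrS⟩ h') (not_le.mpr hcon)
      have : r ∈ D (e z0) := ⟨hrS, hag ▸ hrne, k, hrk⟩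
      have := hI _ this
      linarith
  have hsup : sSup (D (e (z i))) = s i := hgreat.csSup_eq
  have hcval : c (e (z i)) = i + 1 := by
    have hset : {k | s k ≤ sSup (D (e (z i)))} = Set.Iic i := by
      ext k
      simp only [Set.mem_setOf_eq, hsup, Set.mem_Iic]
      exact hs.le_iff_le
    rw [hcdef]
    simp only [hset]
    rw [show (Set.Iic i) = ↑(Finset.Iic i) from (Finset.coe_Iic i).symm,
      Set.ncard_coe_finset, Nat.card_Iic]
  refine ⟨e (z i), by rw [← erange]; exact ⟨z i, rfl⟩, ?_⟩
  show c (e (z i)) - (Nat.sqrt (c (e (z i)))) ^ 2 = n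
  rw [hcval, hsqrt, hi1]
  omega
end

section
/- Let S ⊆ (0,∞) be an infinite countable set of positive reals, and assume that the reverse order > does not induce a well-ordering on S (i.e., some nonempty subset of S has no greatest element). Then Q_S is divisible: there exist a positive integer k and a map χ : Q_S → {0,…,k−1} such that χ is not constant on any isometric copy of Q_S inside Q_S. -/
private lemma finset_bound (s : ℕ → ℝ) (hs : Monotone s) (F : Finset ℝ)
    (h : ∀ b ∈ F, ∃ n, b < s n) : ∃ n, ∀ b ∈ F, b < s n := by
  classical
  induction F using Finset.induction_on with
  | empty => exact ⟨0, by simp⟩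
  | @insert a F haF ih =>
    obtain ⟨n₁, hn₁⟩ := h a (Finset.mem_insert_self a F)
    obtain ⟨n₂, hn₂⟩ := ih (fun b hb => h b (Finset.mem_insert_of_mem hb))
    refine ⟨max n₁ n₂, fun b hb => ?_⟩
    rcases Finset.mem_insert.mp hb with rfl | hb
    · exact lt_of_lt_of_le hn₁ (hs (le_max_left _ _))
    · exact lt_of_lt_of_le (hn₂ b hb) (hs (le_max_right _ _))

private lemma exists_cofinal_seq (T : Set ℝ) (hc : T.Countable) (hne : T.Nonempty)
    (hstep : ∀ m ∈ T, ∃ t ∈ T, m < t) :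
    ∃ s : ℕ → ℝ, (∀ n, s n ∈ T) ∧ StrictMono s ∧ ∀ x ∈ T, ∃ n, x < s n := by
  classical
  obtain ⟨f, hf⟩ := Set.Countable.exists_eq_range hc hne
  have hfT : ∀ n, f n ∈ T := fun n => hf ▸ Set.mem_range_self n
  obtain ⟨N, hN⟩ : ∃ N : ℝ → ℝ, ∀ m ∈ T, N m ∈ T ∧ m < N m := by
    refine ⟨fun m => if h : m ∈ T then (hstep m h).choose else 0, fun m hm => ?_⟩
    simp only [dif_pos hm]
    obtain ⟨h1, h2⟩ := (hstep m hm).choose_spec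
    exact ⟨h1, h2⟩
  set g : ℕ → ℝ := fun n => Nat.rec (f 0) (fun k gk => N (max gk (f k))) n with hg
  have hgs : ∀ n, g (n+1) = N (max (g n) (f n)) := fun n => rfl
  have hgT : ∀ n, g n ∈ T := by
    intro n
    induction n with
    | zero => exact hfT 0
    | succ k ih =>
      rw [hgs]
      have hm : max (g k) (f k) ∈ T := by
        rcases max_choice (g k) (f k) with h | h <;> rw [h]
        exacts [ih, hfT k]
      exact (hN _ hm).1
  have hmaxT : ∀ k, max (g k) (f k) ∈ T := by
    intro k
    rcases max_choice (g k) (f k) with h | h <;> rw [h]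
    exacts [hgT k, hfT k]
  have hmono : StrictMono g := by
    apply strictMono_nat_of_lt_succ
    intro n
    rw [hgs]
    exact lt_of_le_of_lt (le_max_left _ _) (hN _ (hmaxT n)).2
  refine ⟨g, hgT, hmono, ?_⟩
  intro x hx
  rw [hf] at hx
  obtain ⟨k, rfl⟩ := hx
  refine ⟨k + 1, ?_⟩
  rw [hgs]
  exact lt_of_le_of_lt (le_max_right _ _) (hN _ (hmaxT k)).2

/-- If `S ⊆ (0,∞)` is infinite countable and `>` does not
well-order `S`, then `Q_S` is divisible. -/
theorem stmt1 (S : Set ℝ) (hpos : S ⊆ Set.Ioi 0) (hcount : S.Countable)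
    (hinf : S.Infinite) (hnwo : ¬ RevWellOrdered S) :
    ∃ k : ℕ, 0 < k ∧ ∃ χ : QS S → Fin k,
      ∀ X : Set (QS S), IsCopyOfQS S X → ∃ x ∈ X, ∃ y ∈ X, χ x ≠ χ y := by
  classical
  rw [RevWellOrdered] at hnwo
  push_neg at hnwo
  obtain ⟨T, hTS, hTne, hTnomax⟩ := hnwo
  obtain ⟨s, hsT, hsmono, hscof⟩ := exists_cofinal_seq T (hcount.mono hTS) hTne hTnomax
  have hsnS : ∀ n, s n ∈ S := fun n => hTS (hsT n)
  have hspos : ∀ n, 0 < s n := fun n => hpos (hsnS n)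
  set P : QS S → ℕ → Prop :=
    (fun x n => ∀ p : S, (∃ t ∈ T, (p : ℝ) ≤ t) → s n < (p : ℝ) → x.1 p = 0) with hP
  have hex : ∀ x : QS S, ∃ n, P x n := by
    intro x
    have hAfin : {p : S | x.1 p ≠ 0 ∧ ∃ t ∈ T, (p : ℝ) ≤ t}.Finite :=
      x.2.subset (fun p hp => hp.1)
    have hBfin : (Subtype.val '' {p : S | x.1 p ≠ 0 ∧ ∃ t ∈ T, (p : ℝ) ≤ t}).Finite :=
      hAfin.image _
    have hbnd : ∀ b ∈ hBfin.toFinset, ∃ n, b < s n := by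
      intro b hb
      rw [Set.Finite.mem_toFinset] at hb
      obtain ⟨p, ⟨-, t, htT, hpt⟩, rfl⟩ := hb
      obtain ⟨n, hn⟩ := hscof t htT
      exact ⟨n, lt_of_le_of_lt hpt hn⟩
    obtain ⟨n, hn⟩ := finset_bound s hsmono.monotone hBfin.toFinset hbnd
    refine ⟨n, fun p hdom hlt => ?_⟩
    by_contra hne0
    have hpB : (p : ℝ) ∈ hBfin.toFinset := by
      rw [Set.Finite.mem_toFinset]
      exact ⟨p, ⟨hne0, hdom⟩, rfl⟩
    exact absurd (hn _ hpB) (not_lt.mpr hlt.le)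
  have hPfind : ∀ x : QS S, P x (Nat.find (hex x)) := fun x => Nat.find_spec (hex x)
  refine ⟨2, two_pos, fun x => ⟨Nat.find (hex x) % 2, Nat.mod_lt _ two_pos⟩, ?_⟩
  intro X hX
  obtain ⟨e, he_inj, he_range, he_iso⟩ := hX
  -- the zero point and the delta points
  set zero : QS S := ⟨fun _ => 0, by
    have : Function.support (fun _ : S => (0 : ℕ)) = ∅ := Function.support_zero
    rw [this]; exact Set.finite_empty⟩ with hzero
  set pt : ℕ → S := fun n => ⟨s n, hsnS n⟩ with hpt
  have hdelta : ∀ n : ℕ, (Function.support (fun p : S => if p = pt n then 1 else 0)).Finite := by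
    intro n
    apply Set.Finite.subset (Set.finite_singleton (pt n))
    intro p hp
    rw [Function.mem_support] at hp
    by_contra hne
    rw [Set.mem_singleton_iff] at hne
    rw [if_neg hne] at hp
    exact hp rfl
  set delta : ℕ → QS S := fun n => ⟨fun p => if p = pt n then 1 else 0, hdelta n⟩ with hdel
  have hD0 : ∀ n, {q : S | zero.1 q ≠ (delta n).1 q} = {pt n} := by
    intro n
    ext q
    simp only [hzero, hdel, Set.mem_setOf_eq, Set.mem_singleton_iff]
    by_cases hq : q = pt n
    · simp [hq]
    · simp [hq]
  have hdist0 : ∀ n, qdist S zero (delta n) = s n := by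
    intro n
    show sSup (Subtype.val '' {q : S | zero.1 q ≠ (delta n).1 q}) = s n
    rw [hD0 n, Set.image_singleton]
    exact csSup_singleton _
  set a := e zero with ha
  set Ng := Nat.find (hex a) with hNg
  have haP : P a Ng := hPfind a
  have key : ∀ n, Ng < n → Nat.find (hex (e (delta n))) = n := by
    intro n hn
    set b := e (delta n) with hb
    have hd : qdist S a b = s n := by rw [ha, hb, he_iso, hdist0]
    set D := {q : S | a.1 q ≠ b.1 q} with hDdef
    have hDfin : D.Finite := by
      apply (a.2.union b.2).subset
      intro q hq
      by_contra hq2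
      simp only [Set.mem_union, Function.mem_support, not_or, not_not] at hq2
      exact hq (hq2.1.trans hq2.2.symm)
    have hIfin : (Subtype.val '' D).Finite := hDfin.image _
    have hDne : D.Nonempty := by
      by_contra hD
      rw [Set.not_nonempty_iff_eq_empty] at hD
      have h0 : qdist S a b = 0 := by
        show sSup (Subtype.val '' D) = 0
        rw [hD, Set.image_empty, Real.sSup_empty]
      rw [hd] at h0
      exact absurd h0 (ne_of_gt (hspos n))
    have hIne : (Subtype.val '' D).Nonempty := hDne.image _
    have hmax_mem : s n ∈ Subtype.val '' D := by
      rw [← hd]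
      exact hIne.csSup_mem hIfin
    have hub : ∀ q ∈ D, (q : ℝ) ≤ s n := by
      intro q hq
      rw [← hd]
      exact le_csSup hIfin.bddAbove ⟨q, hq, rfl⟩
    obtain ⟨q0, hq0D, hq0⟩ := hmax_mem
    have hq0pt : q0 = pt n := Subtype.ext hq0
    have hapt : a.1 (pt n) = 0 := haP (pt n) ⟨s n, hsT n, le_refl _⟩ (hsmono hn)
    have hbpt : b.1 (pt n) ≠ 0 := by
      have hne : a.1 (pt n) ≠ b.1 (pt n) := hq0pt ▸ hq0D
      rw [hapt] at hne
      intro h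
      rw [h] at hne
      exact hne rfl
    have hPn : P b n := by
      intro p hdom hlt
      have hpD : p ∉ D := fun hp => absurd (hub p hp) (not_le.mpr hlt)
      have hab : a.1 p = b.1 p := not_ne_iff.mp hpD
      rw [← hab]
      exact haP p hdom (lt_trans (hsmono hn) hlt)
    have hlow : ∀ m, m < n → ¬ P b m := by
      intro m hm hPm
      exact hbpt (hPm (pt n) ⟨s n, hsT n, le_refl _⟩ (hsmono hm))
    have h1 : Nat.find (hex b) ≤ n := Nat.find_le hPn
    have h2 : ¬ Nat.find (hex b) < n := fun hlt => hlow _ hlt (Nat.find_spec (hex b))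
    omega
  have hx1 : e (delta (Ng + 1)) ∈ X := he_range ▸ Set.mem_range_self _
  have hx2 : e (delta (Ng + 2)) ∈ X := he_range ▸ Set.mem_range_self _
  refine ⟨_, hx1, _, hx2, ?_⟩
  intro h
  have hv := congrArg Fin.val h
  simp only [] at hv
  rw [key (Ng + 1) (by omega), key (Ng + 2) (by omega)] at hv
  omega
end

section
/- Let S ⊆ (0,∞) be an infinite countable set of positive reals, and assume that the reverse order > induces a well-ordering on S (i.e., every nonempty subset of S has a greatest element). Then Q_S is indivisible: for every positive integer k and every map χ : Q_S → {0,…,k−1}, there is an isometric copy of Q_S inside Q_S on which χ is constant. -/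
namespace Stmt2Aux

variable {S : Set ℝ}

lemma qdist_self (x : QS S) : qdist S x x = 0 := by
  have h : {s : S | x.1 s ≠ x.1 s} = ∅ := by simp
  simp [qdist, h, Real.sSup_empty]

lemma qdist_comm (x y : QS S) : qdist S x y = qdist S y x := by
  have h : {s : S | x.1 s ≠ y.1 s} = {s : S | y.1 s ≠ x.1 s} := by
    ext s; exact ne_comm
  rw [qdist, qdist, h]

lemma diff_finite (x y : QS S) : {s : S | x.1 s ≠ y.1 s}.Finite := by
  apply Set.Finite.subset (x.2.union y.2)
  intro s hs
  simp only [Set.mem_setOf_eq] at hs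
  simp only [Set.mem_union, Function.mem_support]
  by_contra hc
  push_neg at hc
  exact hs (hc.1.trans hc.2.symm)

lemma exists_max_diff {x y : QS S} (h : x ≠ y) :
    ∃ s : S, qdist S x y = s ∧ x.1 s ≠ y.1 s ∧ ∀ t : S, x.1 t ≠ y.1 t → (t : ℝ) ≤ s := by
  have hne : {s : S | x.1 s ≠ y.1 s}.Nonempty := by
    by_contra hc
    rw [Set.not_nonempty_iff_eq_empty] at hc
    apply h
    apply Subtype.ext
    funext s
    by_contra hs
    exact absurd hc (by
      apply Set.nonempty_iff_ne_empty.mp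
      exact ⟨s, hs⟩)
  have hfin : (Subtype.val '' {s : S | x.1 s ≠ y.1 s}).Finite := (diff_finite x y).image _
  have himg : (Subtype.val '' {s : S | x.1 s ≠ y.1 s}).Nonempty := hne.image _
  have hmem := himg.csSup_mem hfin
  obtain ⟨s, hsd, hval⟩ := hmem
  refine ⟨s, ?_, hsd, ?_⟩
  · rw [qdist, hval]
  · intro t ht
    rw [hval]
    exact le_csSup hfin.bddAbove ⟨t, ht, rfl⟩

lemma qdist_mem {x y : QS S} (h : x ≠ y) : qdist S x y ∈ S := by
  obtain ⟨s, hq, _, _⟩ := exists_max_diff h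
  rw [hq]; exact s.2

lemma qdist_pos (hpos : S ⊆ Set.Ioi 0) {x y : QS S} (h : x ≠ y) : 0 < qdist S x y :=
  hpos (qdist_mem h)

lemma qdist_nonneg (hpos : S ⊆ Set.Ioi 0) (x y : QS S) : 0 ≤ qdist S x y := by
  rcases eq_or_ne x y with rfl | h
  · rw [qdist_self]
  · exact (qdist_pos hpos h).le

lemma qdist_mem_or (x y : QS S) : qdist S x y ∈ S ∨ qdist S x y = 0 := by
  rcases eq_or_ne x y with rfl | h
  · exact Or.inr (qdist_self x)
  · exact Or.inl (qdist_mem h)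

lemma qdist_ne_zero {x y : QS S} (hpos : S ⊆ Set.Ioi 0) (h : x ≠ y) : qdist S x y ≠ 0 :=
  (qdist_pos hpos h).ne'

lemma le_qdist {x y : QS S} {t : S} (ht : x.1 t ≠ y.1 t) : (t : ℝ) ≤ qdist S x y :=
  le_csSup ((diff_finite x y).image _).bddAbove ⟨t, ht, rfl⟩

lemma qdist_ultra (hpos : S ⊆ Set.Ioi 0) (x y z : QS S) :
    qdist S x z ≤ max (qdist S x y) (qdist S y z) := by
  rcases eq_or_ne x z with rfl | hxz
  · rw [qdist_self]
    exact le_max_of_le_left (qdist_nonneg hpos x y)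
  · obtain ⟨s, hq, hne, _⟩ := exists_max_diff hxz
    rw [hq]
    by_cases hxy : x.1 s = y.1 s
    · have : y.1 s ≠ z.1 s := fun h => hne (hxy.trans h)
      exact le_max_of_le_right (le_qdist this)
    · exact le_max_of_le_left (le_qdist hxy)



/-! ### Balls and rminus -/

def Ball (S : Set ℝ) (p : QS S) (r : ℝ) : Set (QS S) := {y | qdist S p y ≤ r}

lemma mem_ball_iff {p y : QS S} {r : ℝ} : y ∈ Ball S p r ↔ qdist S p y ≤ r := Iff.rfl

lemma mem_ball_self {p : QS S} {r : ℝ} (hr : 0 ≤ r) : p ∈ Ball S p r := by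
  rw [mem_ball_iff, qdist_self]; exact hr

lemma ball_mono {p : QS S} {r r' : ℝ} (h : r ≤ r') : Ball S p r ⊆ Ball S p r' :=
  fun _ hy => le_trans hy h

lemma ball_eq_of_mem (hpos : S ⊆ Set.Ioi 0) {p q : QS S} {r : ℝ} (hq : q ∈ Ball S p r) :
    Ball S q r = Ball S p r := by
  ext z
  simp only [mem_ball_iff] at *
  constructor
  · intro hz
    calc qdist S p z ≤ max (qdist S p q) (qdist S q z) := qdist_ultra hpos p q z
    _ ≤ r := max_le hq hz
  · intro hz
    calc qdist S q z ≤ max (qdist S q p) (qdist S p z) := qdist_ultra hpos q p z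
    _ ≤ r := max_le (by rw [qdist_comm]; exact hq) hz

lemma ball_subset_ball (hpos : S ⊆ Set.Ioi 0) {p q : QS S} {r r' : ℝ}
    (hq : q ∈ Ball S p r') (hr : r ≤ r') : Ball S q r ⊆ Ball S p r' := by
  rw [← ball_eq_of_mem hpos hq]
  exact ball_mono hr

lemma rminus_nonneg (hpos : S ⊆ Set.Ioi 0) (r : ℝ) : 0 ≤ rminus S r := by
  rw [rminus]
  rcases Set.eq_empty_or_nonempty {t | t ∈ S ∧ t < r} with h | h
  · rw [h, Real.sSup_empty]
  · obtain ⟨t, htS, htr⟩ := h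
    have hb : BddAbove {t | t ∈ S ∧ t < r} := ⟨r, fun u hu => hu.2.le⟩
    exact le_trans (hpos htS).le (le_csSup hb ⟨htS, htr⟩)

lemma le_rminus {t r : ℝ} (ht : t ∈ S) (hlt : t < r) : t ≤ rminus S r :=
  le_csSup ⟨r, fun u hu => hu.2.le⟩ ⟨ht, hlt⟩

lemma le_rminus_of_lt (hpos : S ⊆ Set.Ioi 0) {a r : ℝ} (ha : a ∈ S ∨ a = 0) (h : a < r) :
    a ≤ rminus S r := by
  rcases ha with ha | ha
  · exact le_rminus ha h
  · rw [ha]; exact rminus_nonneg hpos r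

lemma rminus_mem_or (hwo : RevWellOrdered S) (r : ℝ) :
    rminus S r ∈ S ∨ rminus S r = 0 := by
  rcases Set.eq_empty_or_nonempty {t | t ∈ S ∧ t < r} with h | h
  · right; rw [rminus, h, Real.sSup_empty]
  · left
    obtain ⟨m, hm, hmax⟩ := hwo {t | t ∈ S ∧ t < r} (fun t ht => ht.1) h
    have : rminus S r = m := by
      rw [rminus]
      exact IsGreatest.csSup_eq ⟨hm, fun t ht => hmax t ht⟩
    rw [this]; exact hm.1

lemma rminus_lt (hpos : S ⊆ Set.Ioi 0) (hwo : RevWellOrdered S) {r : ℝ} (hr : r ∈ S) :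
    rminus S r < r := by
  rcases Set.eq_empty_or_nonempty {t | t ∈ S ∧ t < r} with h | h
  · rw [rminus, h, Real.sSup_empty]; exact hpos hr
  · obtain ⟨m, hm, hmax⟩ := hwo {t | t ∈ S ∧ t < r} (fun t ht => ht.1) h
    have : rminus S r = m := by
      rw [rminus]
      exact IsGreatest.csSup_eq ⟨hm, fun t ht => hmax t ht⟩
    rw [this]; exact hm.2

lemma eq_of_gt_rminus (hpos : S ⊆ Set.Ioi 0) {a r : ℝ} (ha : a ∈ S ∨ a = 0)
    (h1 : a ≤ r) (h2 : rminus S r < a) : a = r := by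
  by_contra hne
  exact absurd (le_rminus_of_lt hpos ha (lt_of_le_of_ne h1 hne)) (not_le.mpr h2)

/-! ### Smallness, perfection, greatness -/

def Sm (S : Set ℝ) (D : Set (QS S)) (p : QS S) (r : ℝ) : Prop :=
  ∃ F : Finset (QS S), D ∩ Ball S p r ⊆ ⋃ f ∈ F, Ball S f (rminus S r)

def PerfIn (S : Set ℝ) (D : Set (QS S)) (r₀ : ℝ) : Prop :=
  ∀ q ∈ D, ∀ r, r ∈ S → r ≤ r₀ → ¬ Sm S D q r

def Great (S : Set ℝ) (A : Set (QS S)) (p : QS S) (r₀ : ℝ) : Prop :=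
  ∃ D, D ⊆ A ∩ Ball S p r₀ ∧ D.Nonempty ∧ PerfIn S D r₀

def PerfU (S : Set ℝ) (D : Set (QS S)) : Prop :=
  ∀ q ∈ D, ∀ r, r ∈ S → ¬ Sm S D q r

lemma Sm_mono {D D' : Set (QS S)} {p : QS S} {r : ℝ} (h : D' ⊆ D) :
    Sm S D p r → Sm S D' p r := by
  rintro ⟨F, hF⟩
  exact ⟨F, fun z hz => hF ⟨h hz.1, hz.2⟩⟩

lemma Sm_ball_congr {D : Set (QS S)} {p q : QS S} {r : ℝ} (h : Ball S p r = Ball S q r) :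
    Sm S D p r ↔ Sm S D q r := by
  rw [Sm, Sm, h]

lemma Great_ball_congr {A : Set (QS S)} {p q : QS S} {r : ℝ} (h : Ball S p r = Ball S q r) :
    Great S A p r ↔ Great S A q r := by
  rw [Great, Great, h]



/-! ### update points and pigeonhole -/

lemma ultra3 (hpos : S ⊆ Set.Ioi 0) {a b c d : QS S} {ρ : ℝ}
    (h1 : qdist S a b ≤ ρ) (h2 : qdist S b c ≤ ρ) (h3 : qdist S c d ≤ ρ) :
    qdist S a d ≤ ρ := by
  calc qdist S a d ≤ max (qdist S a b) (qdist S b d) := qdist_ultra hpos a b d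
  _ ≤ max ρ (max (qdist S b c) (qdist S c d)) :=
      max_le_max h1 (qdist_ultra hpos b c d)
  _ ≤ ρ := by rw [max_le_iff]; exact ⟨le_rfl, max_le h2 h3⟩

lemma exists_uncovered (hpos : S ⊆ Set.Ioi 0) {r : ℝ} (F : Finset (QS S)) {z : ℕ → QS S}
    (hsep : ∀ i j : ℕ, i ≠ j → ¬ (qdist S (z i) (z j) ≤ rminus S r)) :
    ∃ i, ∀ f ∈ F, z i ∉ Ball S f (rminus S r) := by
  by_contra hc
  push_neg at hc
  have h : ∀ i : ℕ, ∃ f, f ∈ F ∧ z i ∈ Ball S f (rminus S r) := by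
    intro i
    obtain ⟨f, hf1, hf2⟩ := hc i
    exact ⟨f, hf1, hf2⟩
  choose φ hφ1 hφ2 using h
  have hcard : F.card < (Finset.range (F.card + 1)).card := by simp
  obtain ⟨i, _, j, _, hij, hφij⟩ :=
    Finset.exists_ne_map_eq_of_card_lt_of_maps_to hcard (fun i _ => hφ1 i)
  apply hsep i j hij
  have h1 : qdist S (z i) (φ i) ≤ rminus S r := by rw [qdist_comm]; exact hφ2 i
  have h2 : qdist S (φ i) (z j) ≤ rminus S r := by rw [hφij]; exact hφ2 j
  calc qdist S (z i) (z j) ≤ max (qdist S (z i) (φ i)) (qdist S (φ i) (z j)) :=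
      qdist_ultra hpos _ _ _
  _ ≤ rminus S r := max_le h1 h2

noncomputable def upd (p : QS S) (s : S) (n : ℕ) : QS S :=
  ⟨fun t => if t = s then n else p.1 t, by
    apply Set.Finite.subset (p.2.union (Set.finite_singleton s))
    intro t ht
    simp only [Function.mem_support] at ht
    by_cases h : t = s
    · exact Or.inr h
    · left
      simp only [Function.mem_support]
      simpa [h] using ht⟩

lemma upd_apply (p : QS S) (s : S) (n : ℕ) (t : S) :
    (upd p s n).1 t = if t = s then n else p.1 t := rfl

lemma qdist_upd_le (hpos : S ⊆ Set.Ioi 0) (p : QS S) (s : S) (n : ℕ) :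
    qdist S p (upd p s n) ≤ s := by
  rcases eq_or_ne p (upd p s n) with h | h
  · rw [← h, qdist_self]; exact (hpos s.2).le
  · obtain ⟨t, hq, hne, _⟩ := exists_max_diff h
    rw [hq]
    by_cases hts : t = s
    · rw [hts]
    · exfalso; apply hne; rw [upd_apply, if_neg hts]

lemma qdist_upd_ne (p : QS S) (s : S) {n m : ℕ} (h : n ≠ m) :
    qdist S (upd p s n) (upd p s m) = s := by
  have hne : upd p s n ≠ upd p s m := by
    intro he
    apply h
    have := congrArg (fun z : QS S => z.1 s) he
    simpa [upd_apply] using this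
  obtain ⟨t, hq, hdne, _⟩ := exists_max_diff hne
  rw [hq]
  by_cases hts : t = s
  · rw [hts]
  · exfalso; apply hdne; rw [upd_apply, upd_apply, if_neg hts, if_neg hts]

lemma not_small_univ (hpos : S ⊆ Set.Ioi 0) (hwo : RevWellOrdered S)
    {r : ℝ} (hr : r ∈ S) (p : QS S) : ¬ Sm S Set.univ p r := by
  rintro ⟨F, hcov⟩
  set z : ℕ → QS S := fun n => upd p ⟨r, hr⟩ n with hz
  have hsep : ∀ i j : ℕ, i ≠ j → ¬ (qdist S (z i) (z j) ≤ rminus S r) := by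
    intro i j hij hle
    rw [hz] at hle
    simp only at hle
    rw [qdist_upd_ne p ⟨r, hr⟩ hij] at hle
    exact absurd hle (not_le.mpr (rminus_lt hpos hwo hr))
  obtain ⟨i, hi⟩ := exists_uncovered hpos F hsep
  have hzB : z i ∈ Ball S p r := qdist_upd_le hpos p ⟨r, hr⟩ i
  have := hcov ⟨Set.mem_univ _, hzB⟩
  rw [Set.mem_iUnion₂] at this
  obtain ⟨f, hf, hzf⟩ := this
  exact hi f hf hzf

lemma perfU_univ (hpos : S ⊆ Set.Ioi 0) (hwo : RevWellOrdered S) :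
    PerfU S (Set.univ : Set (QS S)) :=
  fun p _ r hr => not_small_univ hpos hwo hr p

/-! ### the covering lemma (G1) -/

lemma cover_of_not_great (hpos : S ⊆ Set.Ioi 0) (hwo : RevWellOrdered S)
    {A : Set (QS S)} {x : QS S} {r : ℝ} (hr : r ∈ S) (hng : ¬ Great S A x r) :
    ∃ F : Finset (QS S), {y | y ∈ Ball S x r ∧ Great S A y (rminus S r)} ⊆
      ⋃ f ∈ F, Ball S f (rminus S r) := by
  classical
  by_contra hc
  push_neg at hc
  have h : ∀ F : Finset (QS S), ∃ y, (y ∈ Ball S x r ∧ Great S A y (rminus S r)) ∧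
      y ∉ ⋃ f ∈ F, Ball S f (rminus S r) := by
    intro F
    obtain ⟨y, hy1, hy2⟩ := Set.not_subset.mp (hc F)
    exact ⟨y, hy1, hy2⟩
  choose Y hY1 hY2 using h
  set g : ℕ → Finset (QS S) := fun n => Nat.rec ∅ (fun _ prev => insert (Y prev) prev) n with hg
  set y : ℕ → QS S := fun n => Y (g n) with hy
  have hg_succ : ∀ n, g (n + 1) = insert (y n) (g n) := fun n => rfl
  have hmem : ∀ i n, i < n → y i ∈ g n := by
    intro i n hin
    induction n with
    | zero => omega
    | succ n ih =>
      rw [hg_succ]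
      rcases Nat.lt_succ_iff_lt_or_eq.mp hin with h' | h'
      · exact Finset.mem_insert_of_mem (ih h')
      · subst h'; exact Finset.mem_insert_self _ _
  have hsep : ∀ i j, i < j → ¬ (qdist S (y i) (y j) ≤ rminus S r) := by
    intro i j hij hle
    apply hY2 (g j)
    rw [Set.mem_iUnion₂]
    exact ⟨y i, hmem i j hij, hle⟩
  have hyGreat : ∀ n, Great S A (y n) (rminus S r) := fun n => (hY1 (g n)).2
  have hyBall : ∀ n, y n ∈ Ball S x r := fun n => (hY1 (g n)).1
  choose E hE1 hE2 hE3 using hyGreat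
  apply hng
  refine ⟨⋃ n, E n, ?_, ?_, ?_⟩
  · rintro w hw
    rw [Set.mem_iUnion] at hw
    obtain ⟨n, hwn⟩ := hw
    obtain ⟨hwA, hwB⟩ := hE1 n hwn
    exact ⟨hwA, ball_subset_ball hpos (hyBall n) (rminus_lt hpos hwo hr).le hwB⟩
  · obtain ⟨w, hw⟩ := hE2 0
    exact ⟨w, Set.mem_iUnion.mpr ⟨0, hw⟩⟩
  · intro q hq r' hr'S hr'r
    rw [Set.mem_iUnion] at hq
    obtain ⟨n, hqn⟩ := hq
    rcases lt_or_eq_of_le hr'r with hlt | heq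
    · have hr'min : r' ≤ rminus S r := le_rminus hr'S hlt
      intro hsm
      exact hE3 n q hqn r' hr'S hr'min (Sm_mono (Set.subset_iUnion E n) hsm)
    · subst heq
      rintro ⟨F₂, hcov⟩
      have hqB : q ∈ Ball S x r' :=
        ball_subset_ball hpos (hyBall n) (rminus_lt hpos hwo hr'S).le ((hE1 n hqn).2)
      have hBeq : Ball S q r' = Ball S x r' := ball_eq_of_mem hpos hqB
      choose zz hzz using hE2
      have hzzB : ∀ m, zz m ∈ Ball S (y m) (rminus S r') := fun m => (hE1 m (hzz m)).2
      have hsep2 : ∀ i j : ℕ, i ≠ j → ¬ (qdist S (zz i) (zz j) ≤ rminus S r') := by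
        intro i j hij hle
        have hyy : qdist S (y i) (y j) ≤ rminus S r' := by
          apply ultra3 hpos (b := zz i) (c := zz j)
          · exact hzzB i
          · exact hle
          · rw [qdist_comm]; exact hzzB j
        rcases Nat.lt_or_ge i j with h' | h'
        · exact hsep i j h' hyy
        · have h'' : j < i := by omega
          rw [qdist_comm] at hyy
          exact hsep j i h'' hyy
      obtain ⟨i, hi⟩ := exists_uncovered hpos F₂ hsep2
      have hzi : zz i ∈ (⋃ m, E m) ∩ Ball S q r' := by
        constructor
        · exact Set.mem_iUnion.mpr ⟨i, hzz i⟩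
        · rw [hBeq]
          exact ball_subset_ball hpos (hyBall i) (rminus_lt hpos hwo hr'S).le (hzzB i)
      have := hcov hzi
      rw [Set.mem_iUnion₂] at this
      obtain ⟨f, hf, hzf⟩ := this
      exact hi f hf hzf



/-! ### the main claim -/

lemma main_claim (hpos : S ⊆ Set.Ioi 0) (hwo : RevWellOrdered S)
    {G A : Set (QS S)} (hG : PerfU S G) (hA : A ⊆ G) (p₀ : QS S) (r₀ : ℝ)
    (hr₀ : r₀ ∈ S ∨ r₀ = 0) (hGB : (G ∩ Ball S p₀ r₀).Nonempty)
    (hng : ¬ Great S A p₀ r₀) :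
    ∃ p, p ∈ G ∧ p ∉ A ∧ p ∈ Ball S p₀ r₀ ∧
      ∀ r, (r ∈ S ∨ r = 0) → r ≤ r₀ → ¬ Great S A p r := by
  classical
  have hr₀0 : 0 ≤ r₀ := by
    rcases hr₀ with h | h
    · exact (hpos h).le
    · rw [h]
  by_contra hcon
  push_neg at hcon
  -- hcon : ∀ p, p ∈ G → p ∉ A → p ∈ Ball → ∃ r, (r ∈ S ∨ r = 0) ∧ r ≤ r₀ ∧ Great S A p r
  set B₀ := Ball S p₀ r₀ with hB₀
  set W : QS S → ℝ → Set (QS S) :=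
    fun q ρ => if h : Great S A q ρ then h.choose else ∅ with hWdef
  have hW : ∀ q ρ, Great S A q ρ →
      W q ρ ⊆ A ∩ Ball S q ρ ∧ (W q ρ).Nonempty ∧ PerfIn S (W q ρ) ρ := by
    intro q ρ h
    have : W q ρ = h.choose := by rw [hWdef]; simp only [dif_pos h]
    rw [this]
    exact h.choose_spec
  set exitP : QS S → ℝ → Prop := fun q ρ => (ρ ∈ S ∨ ρ = 0) ∧ ρ ≤ r₀ ∧ q ∈ B₀ ∧
      Great S A q ρ ∧ ∀ ρ', (ρ' ∈ S ∨ ρ' = 0) → ρ < ρ' → ρ' ≤ r₀ → ¬ Great S A q ρ'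
    with hexitP
  set Intern : QS S → Prop := fun p => p ∈ G ∧ p ∈ B₀ ∧
      ∀ r, (r ∈ S ∨ r = 0) → r ≤ r₀ → ¬ Great S A p r with hIntern
  set D : Set (QS S) := {z | (∃ q ρ, exitP q ρ ∧ z ∈ W q ρ) ∨ Intern z} with hD
  have hIntA : ∀ p, Intern p → p ∈ A := by
    intro p hp
    by_contra hpA
    obtain ⟨r, h1, h2, h3⟩ := hcon p hp.1 hpA hp.2.1
    exact hp.2.2 r h1 h2 h3
  have hDA : D ⊆ A := by
    rintro z (⟨q, ρ, hex, hzW⟩ | hint)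
    · exact ((hW q ρ hex.2.2.2.1).1 hzW).1
    · exact hIntA z hint
  have hDB : D ⊆ B₀ := by
    rintro z (⟨q, ρ, hex, hzW⟩ | hint)
    · exact ball_subset_ball hpos hex.2.2.1 hex.2.1 ((hW q ρ hex.2.2.2.1).1 hzW).2
    · exact hint.2.1
  -- key lemma
  have keyl : ∀ q r, q ∈ G → q ∈ B₀ → (r ∈ S ∨ r = 0) → r ≤ r₀ →
      (∀ ρ, (ρ ∈ S ∨ ρ = 0) → r ≤ ρ → ρ ≤ r₀ → ¬ Great S A q ρ) →
      ∃ z, z ∈ D ∧ z ∈ Ball S q r := by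
    intro q r hqG hqB hrad hrr₀ hFb
    have hr0 : 0 ≤ r := by
      rcases hrad with h | h
      · exact (hpos h).le
      · rw [h]
    by_cases hTS : ∃ ρ, ρ ∈ S ∧ ρ ≤ r ∧ Great S A q ρ
    · obtain ⟨m, hm, hmax⟩ := hwo {ρ | ρ ∈ S ∧ ρ ≤ r ∧ Great S A q ρ}
        (fun ρ hρ => hρ.1) (by obtain ⟨ρ, h1, h2, h3⟩ := hTS; exact ⟨ρ, h1, h2, h3⟩)
      have hexit : exitP q m := by
        refine ⟨Or.inl hm.1, hm.2.1.trans hrr₀, hqB, hm.2.2, ?_⟩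
        intro ρ' hρ' hmρ' hρ'r₀ hgr'
        rcases hρ' with hρ'S | hρ'0
        · rcases le_or_gt ρ' r with h' | h'
          · exact absurd (hmax ρ' ⟨hρ'S, h', hgr'⟩) (not_le.mpr hmρ')
          · exact hFb ρ' (Or.inl hρ'S) h'.le hρ'r₀ hgr'
        · rw [hρ'0] at hmρ'
          exact absurd hmρ' (not_lt.mpr (hpos hm.1).le)
      obtain ⟨z, hz⟩ := (hW q m hm.2.2).2.1
      exact ⟨z, Or.inl ⟨q, m, hexit, hz⟩,
        ball_mono hm.2.1 ((hW q m hm.2.2).1 hz).2⟩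
    · by_cases hT0 : Great S A q 0
      · have hexit : exitP q 0 := by
          refine ⟨Or.inr rfl, hr₀0, hqB, hT0, ?_⟩
          intro ρ' hρ' h0ρ' hρ'r₀ hgr'
          have hρ'S : ρ' ∈ S := by
            rcases hρ' with h | h
            · exact h
            · rw [h] at h0ρ'; exact absurd h0ρ' (lt_irrefl 0)
          rcases le_or_gt ρ' r with h' | h'
          · exact hTS ⟨ρ', hρ'S, h', hgr'⟩
          · exact hFb ρ' (Or.inl hρ'S) h'.le hρ'r₀ hgr'
        obtain ⟨z, hz⟩ := (hW q 0 hT0).2.1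
        exact ⟨z, Or.inl ⟨q, 0, hexit, hz⟩,
          ball_mono hr0 ((hW q 0 hT0).1 hz).2⟩
      · have hint : Intern q := by
          refine ⟨hqG, hqB, ?_⟩
          intro ρ hρ hρr₀ hgr
          rcases le_or_gt ρ r with h' | h'
          · rcases hρ with hρS | hρ0
            · exact hTS ⟨ρ, hρS, h', hgr⟩
            · rw [hρ0] at hgr; exact hT0 hgr
          · exact hFb ρ hρ h'.le hρr₀ hgr
        exact ⟨q, Or.inr hint, mem_ball_self hr0⟩
  -- D nonempty
  obtain ⟨g₀, hg₀G, hg₀B⟩ := hGB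
  have hDne : D.Nonempty := by
    obtain ⟨z, hz, _⟩ := keyl g₀ r₀ hg₀G hg₀B hr₀ le_rfl (by
      intro ρ hρ h1 h2
      have : ρ = r₀ := le_antisymm h2 h1
      rw [this, Great_ball_congr (ball_eq_of_mem hpos hg₀B)]
      exact hng)
    exact ⟨z, hz⟩
  -- the common core
  have hcore : ∀ x r, x ∈ G → x ∈ B₀ → r ∈ S → r ≤ r₀ →
      (∀ ρ, (ρ ∈ S ∨ ρ = 0) → r ≤ ρ → ρ ≤ r₀ → ¬ Great S A x ρ) →
      ¬ Sm S D x r := by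
    rintro x r hxG hxB hrS hrr₀ hFb ⟨F₂, hcov⟩
    obtain ⟨F₁, hF₁⟩ := cover_of_not_great hpos hwo hrS (hFb r (Or.inl hrS) le_rfl hrr₀)
    have hnsm := hG x hxG r hrS
    have hns : ¬ (G ∩ Ball S x r ⊆ ⋃ f ∈ (F₁ ∪ F₂), Ball S f (rminus S r)) :=
      fun hsub => hnsm ⟨F₁ ∪ F₂, hsub⟩
    obtain ⟨y, ⟨hyG, hyB⟩, hyout⟩ := Set.not_subset.mp hns
    have hyB₀ : y ∈ B₀ := ball_subset_ball hpos hxB hrr₀ hyB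
    have hyng : ¬ Great S A y (rminus S r) := by
      intro hgr
      apply hyout
      have : y ∈ ⋃ f ∈ F₁, Ball S f (rminus S r) := hF₁ ⟨hyB, hgr⟩
      rw [Set.mem_iUnion₂] at this ⊢
      obtain ⟨f, hf, hyf⟩ := this
      exact ⟨f, Finset.mem_union_left _ hf, hyf⟩
    have hFb' : ∀ ρ, (ρ ∈ S ∨ ρ = 0) → rminus S r ≤ ρ → ρ ≤ r₀ → ¬ Great S A y ρ := by
      intro ρ hρ h1 h2
      rcases lt_or_ge ρ r with hlt | hge
      · rcases eq_or_lt_of_le h1 with heq | hlt2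
        · rw [← heq]; exact hyng
        · exfalso
          have hρS : ρ ∈ S := by
            rcases hρ with h | h
            · exact h
            · exfalso
              rw [h] at hlt2
              exact absurd hlt2 (not_lt.mpr (rminus_nonneg hpos r))
          exact absurd (le_rminus hρS hlt) (not_le.mpr hlt2)
      · have hball : Ball S y ρ = Ball S x ρ :=
          ball_eq_of_mem hpos (ball_mono hge hyB)
        rw [Great_ball_congr hball]
        exact hFb ρ hρ hge h2
    obtain ⟨z, hzD, hzB⟩ := keyl y (rminus S r) hyG hyB₀ (rminus_mem_or hwo r)
      ((rminus_lt hpos hwo hrS).le.trans hrr₀) hFb'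
    have hzx : z ∈ D ∩ Ball S x r :=
      ⟨hzD, ball_subset_ball hpos hyB (rminus_lt hpos hwo hrS).le hzB⟩
    have := hcov hzx
    rw [Set.mem_iUnion₂] at this
    obtain ⟨f, hf, hzf⟩ := this
    apply hyout
    rw [Set.mem_iUnion₂]
    refine ⟨f, Finset.mem_union_right _ hf, ?_⟩
    rw [mem_ball_iff]
    calc qdist S f y ≤ max (qdist S f z) (qdist S z y) := qdist_ultra hpos f z y
    _ ≤ rminus S r := max_le hzf (by rw [qdist_comm]; exact hzB)
  -- conclude : D witnesses greatness of (p₀, r₀)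
  apply hng
  refine ⟨D, fun z hz => ⟨hDA hz, hDB hz⟩, hDne, ?_⟩
  intro z hzD r hrS hrr₀
  rcases hzD with ⟨q, ρ, hex, hzW⟩ | hint
  · rcases le_or_gt r ρ with h | h
    · intro hsm
      have hWD : W q ρ ⊆ D := fun w hw => Or.inl ⟨q, ρ, hex, hw⟩
      exact (hW q ρ hex.2.2.2.1).2.2 z hzW r hrS h (Sm_mono hWD hsm)
    · have hzA : z ∈ A := ((hW q ρ hex.2.2.2.1).1 hzW).1
      have hzG : z ∈ G := hA hzA
      have hzB₀ : z ∈ B₀ := hDB (Or.inl ⟨q, ρ, hex, hzW⟩)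
      have hFb : ∀ ρ', (ρ' ∈ S ∨ ρ' = 0) → r ≤ ρ' → ρ' ≤ r₀ → ¬ Great S A z ρ' := by
        intro ρ' h1 h2 h3
        have hzq : z ∈ Ball S q ρ' :=
          ball_mono (le_trans h.le h2) ((hW q ρ hex.2.2.2.1).1 hzW).2
        rw [Great_ball_congr (ball_eq_of_mem hpos hzq)]
        exact hex.2.2.2.2 ρ' h1 (lt_of_lt_of_le h h2) h3
      exact hcore z r hzG hzB₀ hrS hrr₀ hFb
  · exact hcore z r hint.1 hint.2.1 hrS hrr₀ (fun ρ h1 _ h3 => hint.2.2 ρ h1 h3)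



/-! ### dichotomy and color selection -/

lemma dichot (hpos : S ⊆ Set.Ioi 0) (hwo : RevWellOrdered S) (hSne : S.Nonempty)
    {G A : Set (QS S)} (hG : PerfU S G) (hGne : G.Nonempty) (hA : A ⊆ G) :
    (∃ D, D ⊆ A ∧ D.Nonempty ∧ PerfU S D) ∨
    (∃ P, P ⊆ G \ A ∧ P.Nonempty ∧ PerfU S P) := by
  classical
  obtain ⟨s₀, hs₀S, hs₀max⟩ := hwo S (subset_refl S) hSne
  have hball_top : ∀ p y : QS S, y ∈ Ball S p s₀ := by
    intro p y
    rw [mem_ball_iff]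
    rcases qdist_mem_or p y with h | h
    · exact hs₀max _ h
    · rw [h]; exact (hpos hs₀S).le
  obtain ⟨g₀, hg₀⟩ := hGne
  by_cases hgr : Great S A g₀ s₀
  · left
    obtain ⟨D, hD1, hD2, hD3⟩ := hgr
    exact ⟨D, fun z hz => (hD1 hz).1, hD2,
      fun q hq r hr => hD3 q hq r hr (hs₀max r hr)⟩
  · right
    have hle_s₀ : ∀ r : ℝ, (r ∈ S ∨ r = 0) → r ≤ s₀ := by
      intro r hr
      rcases hr with h | h
      · exact hs₀max r h
      · rw [h]; exact (hpos hs₀S).le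
    set P := {p | p ∈ G ∧ p ∉ A ∧ ∀ r, (r ∈ S ∨ r = 0) → ¬ Great S A p r} with hP
    have hPsub : P ⊆ G \ A := fun p hp => ⟨hp.1, hp.2.1⟩
    have hPne : P.Nonempty := by
      have hne1 : (G ∩ Ball S g₀ s₀).Nonempty := ⟨g₀, hg₀, hball_top g₀ g₀⟩
      obtain ⟨p, h1, h2, _, h4⟩ := main_claim hpos hwo hG hA g₀ s₀ (Or.inl hs₀S)
        hne1 hgr
      have hpP : p ∈ P := ⟨h1, h2, fun r hr => h4 r hr (hle_s₀ r hr)⟩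
      exact ⟨p, hpP⟩
    refine ⟨P, hPsub, hPne, ?_⟩
    rintro q hq r hrS ⟨F₂, hcov⟩
    obtain ⟨F₁, hF₁⟩ := cover_of_not_great hpos hwo hrS (hq.2.2 r (Or.inl hrS))
    have hnsm := hG q hq.1 r hrS
    have hns : ¬ (G ∩ Ball S q r ⊆ ⋃ f ∈ (F₁ ∪ F₂), Ball S f (rminus S r)) :=
      fun hsub => hnsm ⟨F₁ ∪ F₂, hsub⟩
    obtain ⟨y, ⟨hyG, hyB⟩, hyout⟩ := Set.not_subset.mp hns
    have hyng : ¬ Great S A y (rminus S r) := by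
      intro hgr'
      apply hyout
      have : y ∈ ⋃ f ∈ F₁, Ball S f (rminus S r) := hF₁ ⟨hyB, hgr'⟩
      rw [Set.mem_iUnion₂] at this ⊢
      obtain ⟨f, hf, hyf⟩ := this
      exact ⟨f, Finset.mem_union_left _ hf, hyf⟩
    have hne2 : (G ∩ Ball S y (rminus S r)).Nonempty :=
      ⟨y, hyG, mem_ball_self (rminus_nonneg hpos r)⟩
    obtain ⟨p', hp'G, hp'A, hp'B, hp'r⟩ := main_claim hpos hwo hG hA y (rminus S r)
      (rminus_mem_or hwo r) hne2 hyng
    have hp'P : p' ∈ P := by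
      refine ⟨hp'G, hp'A, ?_⟩
      intro ρ hρ
      rcases le_or_gt ρ (rminus S r) with h1 | h1
      · exact hp'r ρ hρ h1
      · rcases lt_or_ge ρ r with h2 | h2
        · exfalso
          have hρS : ρ ∈ S := by
            rcases hρ with h | h
            · exact h
            · exfalso; rw [h] at h1
              exact absurd h1 (not_lt.mpr (rminus_nonneg hpos r))
          exact absurd (le_rminus hρS h2) (not_le.mpr h1)
        · have hball : Ball S p' ρ = Ball S q ρ := by
            apply ball_eq_of_mem hpos
            have hp'q : p' ∈ Ball S q r :=
              ball_subset_ball hpos hyB (rminus_lt hpos hwo hrS).le hp'B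
            exact ball_mono h2 hp'q
          rw [Great_ball_congr hball]
          exact hq.2.2 ρ hρ
    have hp'cov : p' ∈ P ∩ Ball S q r :=
      ⟨hp'P, ball_subset_ball hpos hyB (rminus_lt hpos hwo hrS).le hp'B⟩
    have := hcov hp'cov
    rw [Set.mem_iUnion₂] at this
    obtain ⟨f, hf, hp'f⟩ := this
    apply hyout
    rw [Set.mem_iUnion₂]
    refine ⟨f, Finset.mem_union_right _ hf, ?_⟩
    rw [mem_ball_iff]
    calc qdist S f y ≤ max (qdist S f p') (qdist S p' y) := qdist_ultra hpos f p' y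
    _ ≤ rminus S r := max_le hp'f (by rw [qdist_comm]; exact hp'B)

lemma mono_perfect (hpos : S ⊆ Set.Ioi 0) (hwo : RevWellOrdered S) (hSne : S.Nonempty) :
    ∀ (k : ℕ) (χ : QS S → Fin k) (G : Set (QS S)), PerfU S G → G.Nonempty →
    ∃ c : Fin k, ∃ D, D ⊆ G ∧ D.Nonempty ∧ PerfU S D ∧ ∀ x ∈ D, χ x = c := by
  intro k
  induction k with
  | zero =>
    intro χ G _ hne
    exact (χ hne.some).elim0
  | succ k ih =>
    intro χ G hG hGne
    set A := G ∩ χ ⁻¹' {Fin.last k} with hA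
    rcases dichot hpos hwo hSne hG hGne Set.inter_subset_left with
      ⟨D, hD1, hD2, hD3⟩ | ⟨P, hP1, hP2, hP3⟩
    · exact ⟨Fin.last k, D, fun z hz => (hD1 hz).1, hD2, hD3, fun z hz => (hD1 hz).2⟩
    · have hPlt : ∀ x ∈ P, (χ x).val < k := by
        intro x hx
        have hxG := (hP1 hx).1
        have hxA := (hP1 hx).2
        by_contra h
        apply hxA
        have hval : (χ x).val = k := by
          have := (χ x).isLt
          omega
        exact ⟨hxG, show χ x ∈ ({Fin.last k} : Set (Fin (k+1))) from
          Set.mem_singleton_iff.mpr (Fin.ext hval)⟩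
      rcases Nat.eq_zero_or_pos k with hk | hk
      · exfalso
        obtain ⟨x, hx⟩ := hP2
        have := hPlt x hx
        omega
      · set χ2 : QS S → Fin k := fun x => ⟨min (χ x).val (k - 1), by omega⟩ with hχ2
        obtain ⟨c', D, hD1, hD2, hD3, hD4⟩ := ih χ2 P hP3 hP2
        refine ⟨⟨c'.val, by omega⟩, D, fun z hz => (hP1 (hD1 hz)).1, hD2, hD3, ?_⟩
        intro x hx
        have h1 := hD4 x hx
        have h2 := hPlt x (hD1 hx)
        have h3 : min (χ x).val (k - 1) = c'.val := congrArg Fin.val h1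
        have h4 : c'.val < k := c'.isLt
        apply Fin.ext
        show (χ x).val = c'.val
        omega



/-! ### building the copy -/

noncomputable def seqBuild {α : Type*} (x₀ : α) (F : (ℕ → α) → ℕ → α) : ℕ → α
  | n => F (fun i => if h : i < n then seqBuild x₀ F i else x₀) n
termination_by n => n
decreasing_by exact h

lemma seqBuild_eq {α : Type*} (x₀ : α) (F : (ℕ → α) → ℕ → α) (n : ℕ) :
    seqBuild x₀ F n = F (fun i => if h : i < n then seqBuild x₀ F i else x₀) n := by
  conv_lhs => rw [seqBuild]

def zeroQS (S : Set ℝ) : QS S := ⟨fun _ => 0, by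
  have : Function.support (fun _ : ↥S => (0 : ℕ)) = ∅ := Function.support_zero
  rw [this]; exact Set.finite_empty⟩

lemma qs_countable (hcount : S.Countable) : Countable (QS S) := by
  haveI := hcount.to_subtype
  have hinj : Function.Injective (fun x : QS S =>
      (⟨x.2.toFinset, x.1, fun a => by
        rw [Set.Finite.mem_toFinset]; exact Function.mem_support⟩ : ↥S →₀ ℕ)) := by
    intro x y h
    apply Subtype.ext
    funext a
    exact DFunLike.congr_fun h a
  exact hinj.countable

lemma qs_infinite (hS : S.Nonempty) : Infinite (QS S) := by
  obtain ⟨s, hs⟩ := hS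
  apply Infinite.of_injective (fun n : ℕ => upd (zeroQS S) ⟨s, hs⟩ n)
  intro n m h
  have := congrArg (fun z : QS S => z.1 ⟨s, hs⟩) h
  simpa [upd_apply] using this

lemma exists_copy (hpos : S ⊆ Set.Ioi 0) (hcount : S.Countable) (hSinf : S.Infinite)
    (hwo : RevWellOrdered S) {P : Set (QS S)} (hP : PerfU S P) (hPne : P.Nonempty) :
    ∃ e : QS S → QS S, Function.Injective e ∧ (∀ x, e x ∈ P) ∧
      ∀ x y, qdist S (e x) (e y) = qdist S x y := by
  classical
  haveI := qs_countable hcount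
  haveI := qs_infinite hSinf.nonempty
  haveI := Encodable.ofCountable (QS S)
  haveI := Denumerable.ofEncodableOfInfinite (QS S)
  set eqv : QS S ≃ ℕ := Denumerable.eqv (QS S) with heqv
  set g : ℕ → QS S := fun n => eqv.symm n with hg
  have gne : ∀ i n : ℕ, i < n → g i ≠ g n := by
    intro i n h he
    have := eqv.symm.injective he
    omega
  obtain ⟨p₀, hp₀⟩ := hPne
  have step : ∀ (f : ℕ → QS S) (n : ℕ), ∃ y : QS S,
      ((∀ i, i < n → f i ∈ P) ∧
       (∀ i j, i < n → j < n → qdist S (f i) (f j) = qdist S (g i) (g j))) →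
      (y ∈ P ∧ ∀ i, i < n → qdist S (f i) y = qdist S (g i) (g n)) := by
    intro f n
    by_cases hinv : (∀ i, i < n → f i ∈ P) ∧
       (∀ i j, i < n → j < n → qdist S (f i) (f j) = qdist S (g i) (g j))
    · rcases Nat.eq_zero_or_pos n with rfl | hn
      · exact ⟨p₀, fun _ => ⟨hp₀, fun i hi => absurd hi (by omega)⟩⟩
      · obtain ⟨j, hjmem, hjmin⟩ := Finset.exists_min_image (Finset.range n)
          (fun i => qdist S (g i) (g n)) ⟨0, Finset.mem_range.mpr hn⟩
        have hjn : j < n := Finset.mem_range.mp hjmem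
        set δ := qdist S (g j) (g n) with hδ
        have hδS : δ ∈ S := qdist_mem (gne j n hjn)
        have hfjP : f j ∈ P := hinv.1 j hjn
        have hnsm := hP (f j) hfjP δ hδS
        set F : Finset (QS S) :=
          ((Finset.range n).filter (fun i => qdist S (g i) (g n) = δ)).image f with hF
        have hns : ¬ (P ∩ Ball S (f j) δ ⊆ ⋃ f' ∈ F, Ball S f' (rminus S δ)) :=
          fun hsub => hnsm ⟨F, hsub⟩
        obtain ⟨y, ⟨hyP, hyB⟩, hyout⟩ := Set.not_subset.mp hns
        refine ⟨y, fun _ => ⟨hyP, ?_⟩⟩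
        intro i hi
        have hδle : δ ≤ qdist S (g i) (g n) := hjmin i (Finset.mem_range.mpr hi)
        have hgij : qdist S (g i) (g j) ≤ max (qdist S (g i) (g n)) δ := by
          calc qdist S (g i) (g j)
              ≤ max (qdist S (g i) (g n)) (qdist S (g n) (g j)) := qdist_ultra hpos _ _ _
          _ = max (qdist S (g i) (g n)) δ := by rw [qdist_comm (S := S) (g n) (g j)]
        have hfij : qdist S (f i) (f j) = qdist S (g i) (g j) := hinv.2 i j hi hjn
        rcases eq_or_lt_of_le hδle with heq | hlt
        · rw [← heq]
          have h5 : qdist S (g i) (g j) ≤ δ := by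
            have h := hgij
            rw [← heq, max_self] at h
            exact h
          have hfiF : f i ∈ F := by
            rw [hF]
            exact Finset.mem_image.mpr ⟨i,
              Finset.mem_filter.mpr ⟨Finset.mem_range.mpr hi, heq.symm⟩, rfl⟩
          have hyout_i : y ∉ Ball S (f i) (rminus S δ) := by
            intro hmem
            apply hyout
            rw [Set.mem_iUnion₂]
            exact ⟨f i, hfiF, hmem⟩
          have hub : qdist S (f i) y ≤ δ := by
            calc qdist S (f i) y
                ≤ max (qdist S (f i) (f j)) (qdist S (f j) y) := qdist_ultra hpos _ _ _
            _ ≤ δ := max_le (by rw [hfij]; exact h5) hyB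
          have hlb : rminus S δ < qdist S (f i) y := not_le.mp (fun hle => hyout_i hle)
          exact eq_of_gt_rminus hpos (qdist_mem_or _ _) hub hlb
        · have hgij2 : qdist S (g i) (g j) = qdist S (g i) (g n) := by
            apply le_antisymm
            · exact hgij.trans (le_of_eq (max_eq_left hδle))
            · have h6 : qdist S (g i) (g n) ≤ max (qdist S (g i) (g j)) δ := by
                rw [hδ]
                exact qdist_ultra hpos _ _ _
              by_contra h7
              push_neg at h7
              have : max (qdist S (g i) (g j)) δ < qdist S (g i) (g n) := max_lt h7 hlt
              exact absurd h6 (not_le.mpr this)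
          have hfij2 : qdist S (f i) (f j) = qdist S (g i) (g n) := by rw [hfij, hgij2]
          apply le_antisymm
          · calc qdist S (f i) y
                ≤ max (qdist S (f i) (f j)) (qdist S (f j) y) := qdist_ultra hpos _ _ _
            _ ≤ max (qdist S (g i) (g n)) δ := max_le_max (le_of_eq hfij2) hyB
            _ = qdist S (g i) (g n) := max_eq_left hδle
          · by_contra h8
            push_neg at h8
            have h9 : qdist S (f i) (f j) ≤ max (qdist S (f i) y) (qdist S y (f j)) :=
              qdist_ultra hpos _ _ _
            have h10 : qdist S y (f j) ≤ δ := by rw [qdist_comm]; exact hyB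
            have hmax : max (qdist S (f i) y) (qdist S y (f j)) < qdist S (g i) (g n) :=
              max_lt h8 (lt_of_le_of_lt h10 hlt)
            rw [hfij2] at h9
            exact absurd h9 (not_le.mpr hmax)
    · exact ⟨p₀, fun h => absurd h hinv⟩
  choose Y hY using step
  set E : ℕ → QS S := seqBuild p₀ Y with hE
  have hEeq : ∀ n, E n = Y (fun i => if h : i < n then E i else p₀) n := by
    intro n
    rw [hE]
    exact seqBuild_eq p₀ Y n
  have hInv : ∀ n, E n ∈ P ∧ ∀ i, i < n → qdist S (E i) (E n) = qdist S (g i) (g n) := by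
    intro n
    induction n using Nat.strong_induction_on with
    | _ n ih =>
      have hprev : (∀ i, i < n → (fun i => if h : i < n then E i else p₀) i ∈ P) ∧
          (∀ i j, i < n → j < n →
            qdist S ((fun i => if h : i < n then E i else p₀) i)
              ((fun i => if h : i < n then E i else p₀) j) = qdist S (g i) (g j)) := by
        constructor
        · intro i hi
          simp only [dif_pos hi]
          exact (ih i hi).1
        · intro i j hi hj
          simp only [dif_pos hi, dif_pos hj]
          rcases lt_trichotomy i j with h | h | h
          · exact (ih j hj).2 i h
          · subst h
            rw [qdist_self, qdist_self]
          · rw [qdist_comm, qdist_comm (S := S) (g i) (g j)]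
            exact (ih i hi).2 j h
      have hspec := hY (fun i => if h : i < n then E i else p₀) n hprev
      rw [← hEeq n] at hspec
      refine ⟨hspec.1, ?_⟩
      intro i hi
      have := hspec.2 i hi
      simpa only [dif_pos hi] using this
  have hPair : ∀ i j : ℕ, qdist S (E i) (E j) = qdist S (g i) (g j) := by
    intro i j
    rcases lt_trichotomy i j with h | h | h
    · exact (hInv j).2 i h
    · subst h; rw [qdist_self, qdist_self]
    · rw [qdist_comm, qdist_comm (S := S) (g i) (g j)]
      exact (hInv i).2 j h
  refine ⟨fun x => E (eqv x), ?_, fun x => (hInv (eqv x)).1, ?_⟩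
  · intro x y h
    have hq : qdist S (E (eqv x)) (E (eqv y)) = qdist S x y := by
      rw [hPair]
      rw [hg]
      simp only [Equiv.symm_apply_apply]
    have h' : E (eqv x) = E (eqv y) := h
    rw [h', qdist_self] at hq
    by_contra hne
    exact absurd hq.symm (qdist_ne_zero hpos hne)
  · intro x y
    rw [hPair, hg]
    simp only [Equiv.symm_apply_apply]

end Stmt2Aux


open Stmt2Aux in
theorem stmt2' (S : Set ℝ) (hpos : S ⊆ Set.Ioi 0) (hcount : S.Countable)
    (hinf : S.Infinite) (hwo : RevWellOrdered S) :
    ∀ k : ℕ, 0 < k → ∀ χ : QS S → Fin k,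
      ∃ X : Set (QS S), IsCopyOfQS S X ∧ ∃ c : Fin k, ∀ x ∈ X, χ x = c := by
  intro k _ χ
  have hSne : S.Nonempty := hinf.nonempty
  obtain ⟨c, D, hDsub, hDne, hDperf, hDcol⟩ :=
    mono_perfect hpos hwo hSne k χ Set.univ (perfU_univ hpos hwo)
      ⟨zeroQS S, Set.mem_univ _⟩
  obtain ⟨e, einj, emem, eiso⟩ := exists_copy hpos hcount hinf hwo hDperf hDne
  refine ⟨Set.range e, ⟨e, einj, rfl, eiso⟩, c, ?_⟩
  rintro x ⟨y, rfl⟩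
  exact hDcol _ (emem y)

/-- If `S ⊆ (0,∞)` is infinite countable and `>`
well-orders `S`, then `Q_S` is indivisible. -/
theorem stmt2 (S : Set ℝ) (hpos : S ⊆ Set.Ioi 0) (hcount : S.Countable)
    (hinf : S.Infinite) (hwo : RevWellOrdered S) :
    ∀ k : ℕ, 0 < k → ∀ χ : QS S → Fin k,
      ∃ X : Set (QS S), IsCopyOfQS S X ∧ ∃ c : Fin k, ∀ x ∈ X, χ x = c := by
  exact stmt2' S hpos hcount hinf hwo
end

section
/- Let S ⊆ (0,∞) be an infinite countable set of positive reals, and assume that the reverse order > induces a well-ordering on S (i.e., every nonempty subset of S has a greatest element). Then for every map f : Q_S → ℕ there is an isometric copy X of Q_S inside Q_S such that the restriction of f to X is continuous (with respect to the induced metric topology on X and the discrete topology on ℕ) or injective. -/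
/-!
A ball of radius `σ` splits into infinitely many cells, the subballs at distance `σ` from
each other. Call a ball *tame* (`Tame`) if, outside finitely many cells and finitely many
values of `f`, every point of it is the center of a tame ball of smaller radius.

If the ball of radius `max S` is tame, induction on tameness shows that infinitely many cells
of every tame ball contain roots of trees which branch into infinitely many cells at every
scale and along which `f` is eventually constant (`ContTree`): on a ball where `f` takes only
finitely many values one passes to a subball where a single value is dense, and otherwise one
starts from a point whose witnessing scale is maximal, which exists because `S` is reverse
well-ordered. If that ball is not tame, some point is tame at no scale, and non-tameness
provides, in infinitely many cells, points with new values of `f` that are again tame at no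
scale.

In both cases `Q_S` is enumerated and each `x` is mapped into a fresh cell, at the scale
`minScale x` of its lowest nonzero coordinate, around the image of its truncation `trunc x`.
This map is an isometry, and choosing the images along the trees makes `f` locally constant,
respectively injective, on its range.
-/

theorem RevWellOrdered.exists_forall_le {S : Set ℝ} (hwo : RevWellOrdered S) {α : Type*}
    {R : Set α} (g : α → S) (hR : R.Nonempty) : ∃ y ∈ R, ∀ y' ∈ R, (g y' : ℝ) ≤ g y := by
  obtain ⟨_, ⟨y, hy, rfl⟩, hmax⟩ := hwo ((fun y => (g y : ℝ)) '' R)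
    (by rintro _ ⟨y, -, rfl⟩; exact (g y).2) (hR.image _)
  exact ⟨y, hy, fun y' hy' => hmax _ ⟨y', hy', rfl⟩⟩

namespace QS

open Classical

variable {S : Set ℝ} {f : QS S → ℕ} {top : ℝ}

theorem ext {x y : QS S} (h : ∀ s, x.1 s = y.1 s) : x = y :=
  Subtype.ext (funext h)

instance : Zero (QS S) := ⟨⟨0, by simp⟩⟩

@[simp] theorem zero_apply (s : S) : (0 : QS S).1 s = 0 := rfl

theorem ne_zero_iff {x : QS S} : x ≠ 0 ↔ ∃ s, x.1 s ≠ 0 := by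
  refine ⟨fun h => ?_, fun ⟨s, hs⟩ h => hs (by simp [h])⟩
  by_contra! hx
  exact h (ext hx)

/-! ### The ultrametric -/

theorem finite_setOf_ne (x y : QS S) : {s : S | x.1 s ≠ y.1 s}.Finite :=
  (x.2.union y.2).subset fun s hs => by
    by_contra h
    simp_all [Function.mem_support]

theorem bddAbove_qdist_set (x y : QS S) :
    BddAbove (Subtype.val '' {s : S | x.1 s ≠ y.1 s}) :=
  ((finite_setOf_ne x y).image _).bddAbove

theorem le_qdist {x y : QS S} {s : S} (h : x.1 s ≠ y.1 s) : (s : ℝ) ≤ qdist S x y :=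
  le_csSup (bddAbove_qdist_set x y) ⟨s, h, rfl⟩

theorem eq_of_qdist_lt {x y : QS S} {s : S} (h : qdist S x y < s) : x.1 s = y.1 s := by
  by_contra hs
  exact (le_qdist hs).not_gt h

theorem exists_qdist_eq {x y : QS S} (h : x ≠ y) : ∃ s : S, x.1 s ≠ y.1 s ∧ qdist S x y = s := by
  have hne : (Subtype.val '' {s : S | x.1 s ≠ y.1 s}).Nonempty := by
    by_contra! hempty
    refine h (ext fun s => ?_)
    by_contra hs
    exact hempty.subset ⟨s, hs, rfl⟩
  obtain ⟨s, hs, hq⟩ := hne.csSup_mem ((finite_setOf_ne x y).image _)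
  exact ⟨s, hs, hq.symm⟩

@[simp] theorem qdist_self (x : QS S) : qdist S x x = 0 := by
  simp [qdist]

theorem qdist_comm (x y : QS S) : qdist S x y = qdist S y x := by
  simp only [qdist, ne_comm]

theorem qdist_pos (hpos : S ⊆ Set.Ioi 0) {x y : QS S} (h : x ≠ y) : 0 < qdist S x y := by
  obtain ⟨s, -, hq⟩ := exists_qdist_eq h
  exact hq ▸ hpos s.2

theorem qdist_nonneg (hpos : S ⊆ Set.Ioi 0) (x y : QS S) : 0 ≤ qdist S x y := by
  rcases eq_or_ne x y with rfl | h
  · simp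
  · exact (qdist_pos hpos h).le

theorem qdist_le_iff {x y : QS S} {r : ℝ} (hr : 0 ≤ r) :
    qdist S x y ≤ r ↔ ∀ s : S, r < s → x.1 s = y.1 s := by
  refine ⟨fun h s hs => eq_of_qdist_lt (h.trans_lt hs), fun h => ?_⟩
  rcases eq_or_ne x y with rfl | hne
  · simpa using hr
  obtain ⟨s, hs, hq⟩ := exists_qdist_eq hne
  by_contra! hlt
  exact hs (h s (hq ▸ hlt))

theorem qdist_eq_of_agree_above {x y : QS S} {σ : S} (hσ : x.1 σ ≠ y.1 σ)
    (h : ∀ s : S, (σ : ℝ) < s → x.1 s = y.1 s) : qdist S x y = σ := by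
  obtain ⟨s, hs, hq⟩ := exists_qdist_eq fun hxy : x = y => hσ (by rw [hxy])
  refine hq ▸ le_antisymm ?_ (hq ▸ le_qdist hσ)
  by_contra! hlt
  exact hs (h s hlt)

theorem qdist_le_max (hpos : S ⊆ Set.Ioi 0) (x y z : QS S) :
    qdist S x z ≤ max (qdist S x y) (qdist S y z) := by
  rw [qdist_le_iff (le_max_of_le_left (qdist_nonneg hpos x y))]
  intro s hs
  rw [eq_of_qdist_lt (lt_of_le_of_lt (le_max_left _ _) hs),
    eq_of_qdist_lt (lt_of_le_of_lt (le_max_right _ _) hs)]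

theorem qdist_eq_of_lt (hpos : S ⊆ Set.Ioi 0) {x y z : QS S} (h : qdist S x y < qdist S y z) :
    qdist S x z = qdist S y z := by
  refine le_antisymm ((qdist_le_max hpos x y z).trans (max_le h.le le_rfl)) ?_
  have := qdist_le_max hpos y x z
  rw [qdist_comm y x] at this
  exact (le_max_iff.1 this).resolve_left h.not_ge

/-! ### Balls and cells -/

/-- For `t > 0` this is the open ball of radius `t` around `w`. -/
def ball (w : QS S) (t : ℝ) : Set (QS S) := {y | ∀ s : S, t ≤ s → y.1 s = w.1 s}

theorem mem_ball_self (w : QS S) (t : ℝ) : w ∈ ball w t := fun _ _ => rfl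

theorem ball_congr {w w' : QS S} {t : ℝ} (h : ∀ s : S, t ≤ s → w.1 s = w'.1 s) :
    ball w t = ball w' t := by
  ext y
  exact forall₂_congr fun s hs => by rw [h s hs]

theorem ball_eq_of_mem {w y : QS S} {t : ℝ} (hy : y ∈ ball w t) : ball y t = ball w t :=
  ball_congr hy

theorem ball_subset_of_mem {w y : QS S} {t t' : ℝ} (hy : y ∈ ball w t) (h : t' ≤ t) :
    ball y t' ⊆ ball w t := by
  rw [← ball_eq_of_mem hy]
  exact fun z hz s hs => hz s (h.trans hs)

noncomputable def update (x : QS S) (σ : S) (b : ℕ) : QS S :=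
  ⟨Function.update x.1 σ b, (x.2.union (Set.finite_singleton σ)).subset fun s hs => by
    rcases eq_or_ne s σ with rfl | h
    · exact Or.inr rfl
    · exact Or.inl (by simpa [Function.update_of_ne h] using hs)⟩

@[simp] theorem update_apply_self (x : QS S) (σ : S) (b : ℕ) : (update x σ b).1 σ = b :=
  Function.update_self _ _ _

theorem update_apply_of_ne (x : QS S) {σ s : S} (h : s ≠ σ) (b : ℕ) :
    (update x σ b).1 s = x.1 s :=
  Function.update_of_ne h _ _

/-- The closed ball of radius `σ` around `w` is the disjoint union over `b ∈ ℕ` of the open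
balls `cell w σ b` of radius `σ`. -/
def cell (w : QS S) (σ : S) (b : ℕ) : Set (QS S) := ball (update w σ b) σ

theorem mem_cell_iff {w y : QS S} {σ : S} {b : ℕ} :
    y ∈ cell w σ b ↔ y.1 σ = b ∧ ∀ s : S, (σ : ℝ) < s → y.1 s = w.1 s := by
  have hne : ∀ s : S, (σ : ℝ) < s → s ≠ σ := fun s hs h => hs.ne (by rw [h])
  constructor
  · intro hy
    refine ⟨by simpa using hy σ le_rfl, fun s hs => ?_⟩
    simpa [update_apply_of_ne _ (hne s hs)] using hy s hs.le
  · rintro ⟨h1, h2⟩ s hs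
    rcases eq_or_ne s σ with rfl | h
    · simpa using h1
    · rw [update_apply_of_ne _ h, h2 s (hs.lt_of_ne fun he => h (Subtype.ext he.symm))]

theorem mem_cell_apply (y : QS S) (σ : S) : y ∈ cell y σ (y.1 σ) :=
  mem_cell_iff.2 ⟨rfl, fun _ _ => rfl⟩

theorem cell_congr {w w' : QS S} {σ : S} (h : ∀ s : S, (σ : ℝ) < s → w.1 s = w'.1 s)
    (b : ℕ) : cell w σ b = cell w' σ b := by
  ext y
  simp only [mem_cell_iff]
  exact and_congr_right fun _ => forall₂_congr fun s hs => by rw [h s hs]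

theorem cell_eq_of_qdist_le {w w' : QS S} {σ : S} (h : qdist S w w' ≤ σ) (b : ℕ) :
    cell w σ b = cell w' σ b :=
  cell_congr (fun _ hs => eq_of_qdist_lt (h.trans_lt hs)) b

theorem cell_subset_ball {w u : QS S} {σ : S} {t : ℝ} (hw : w ∈ ball u t) (h : (σ : ℝ) < t)
    (b : ℕ) : cell w σ b ⊆ ball u t := by
  rw [← ball_eq_of_mem hw]
  exact fun y hy s hs => (mem_cell_iff.1 hy).2 s (h.trans_le hs)

theorem qdist_eq_of_mem_cell {w y y' : QS S} {σ : S} {b b' : ℕ} (hbb : b ≠ b')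
    (hy : y ∈ cell w σ b) (hy' : y' ∈ cell w σ b') : qdist S y y' = σ := by
  rw [mem_cell_iff] at hy hy'
  exact qdist_eq_of_agree_above (by rw [hy.1, hy'.1]; exact hbb)
    fun s hs => by rw [hy.2 s hs, hy'.2 s hs]

theorem qdist_le_of_mem_cell (hpos : S ⊆ Set.Ioi 0) {w y : QS S} {σ : S} {b : ℕ}
    (hy : y ∈ cell w σ b) : qdist S w y ≤ σ := by
  rw [qdist_le_iff (hpos σ.2).le]
  exact fun s hs => ((mem_cell_iff.1 hy).2 s hs).symm

/-- Infinitely many cells of `z` at scale `σ` contain a point satisfying `p`. -/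
def ManyCells (z : QS S) (σ : S) (p : QS S → Prop) : Prop :=
  ∀ G : Finset ℕ, ∃ b ∉ G, ∃ y ∈ cell z σ b, p y

theorem ManyCells.mono {z : QS S} {σ : S} {p q : QS S → Prop} (h : ManyCells z σ p)
    (hpq : ∀ y, p y → q y) : ManyCells z σ q := fun G => by
  obtain ⟨b, hb, y, hy, hp⟩ := h G
  exact ⟨b, hb, y, hy, hpq y hp⟩

theorem ManyCells.congr {z z' : QS S} {σ : S} {p : QS S → Prop} (h : ManyCells z σ p)
    (hz : ∀ s : S, (σ : ℝ) < s → z.1 s = z'.1 s) : ManyCells z' σ p := fun G => by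
  obtain ⟨b, hb, y, hy, hp⟩ := h G
  exact ⟨b, hb, y, cell_congr hz b ▸ hy, hp⟩

/-! ### Continuity trees -/

def constStep (f : QS S → ℕ) : (QS S → ℝ → Prop) →o (QS S → ℝ → Prop) where
  toFun P r τ := ∀ σ : S, (σ : ℝ) < τ → ManyCells r σ fun y => f y = f r ∧ P y σ
  monotone' _ _ hPQ _ _ h σ hσ := (h σ hσ).mono fun y hy => ⟨hy.1, hPQ y σ hy.2⟩

/-- `ConstTree f r τ`: below `τ`, `r` is the root of a tree of points with the same value
of `f`, branching into infinitely many cells at every scale. -/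
def ConstTree (f : QS S → ℕ) : QS S → ℝ → Prop := (constStep f).gfp

theorem ConstTree.unfold {r : QS S} {τ : ℝ} (h : ConstTree f r τ) :
    ∀ σ : S, (σ : ℝ) < τ → ManyCells r σ fun y => f y = f r ∧ ConstTree f y σ := by
  rw [ConstTree, ← OrderHom.map_gfp] at h
  exact h

theorem ConstTree.coinduct (P : QS S → ℝ → Prop) (hP : ∀ r τ, P r τ → constStep f P r τ)
    {r : QS S} {τ : ℝ} (h : P r τ) : ConstTree f r τ :=
  OrderHom.le_gfp (constStep f) (a := P) hP r τ h

theorem ConstTree.mono {r : QS S} {τ τ' : ℝ} (h : ConstTree f r τ) (hle : τ' ≤ τ) :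
    ConstTree f r τ' :=
  ConstTree.coinduct (fun r τ' => ∃ τ, τ' ≤ τ ∧ ConstTree f r τ)
    (fun _ _ ⟨_, hle, h⟩ σ hσ => (h.unfold σ (hσ.trans_le hle)).mono
      fun _ hy => ⟨hy.1, σ, le_rfl, hy.2⟩) ⟨τ, hle, h⟩

def contStep (f : QS S → ℕ) : (QS S → ℝ → Prop) →o (QS S → ℝ → Prop) where
  toFun P r t := ∃ τ > 0, ConstTree f r τ ∧
    ∀ σ : S, τ ≤ σ → (σ : ℝ) < t → ManyCells r σ fun y => P y σ
  monotone' _ _ hPQ _ _ := fun ⟨τ, hτ, hc, h⟩ =>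
    ⟨τ, hτ, hc, fun σ h1 h2 => (h σ h1 h2).mono fun y => hPQ y σ⟩

/-- `ContTree f r t`: `r` is the root of a tree which branches into infinitely many cells at
every scale below `t`, and below which `f` is eventually constant along every branch. -/
def ContTree (f : QS S → ℕ) : QS S → ℝ → Prop := (contStep f).gfp

theorem ContTree.unfold {r : QS S} {t : ℝ} (h : ContTree f r t) :
    contStep f (ContTree f) r t := by
  rw [ContTree, ← OrderHom.map_gfp] at h
  exact h

theorem ContTree.fold {r : QS S} {t : ℝ} (h : contStep f (ContTree f) r t) :
    ContTree f r t := by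
  rw [ContTree, ← OrderHom.map_gfp]
  exact h

theorem ContTree.coinduct (P : QS S → ℝ → Prop)
    (hP : ∀ r t, P r t → contStep f (fun r t => P r t ∨ ContTree f r t) r t)
    {r : QS S} {t : ℝ} (h : P r t) : ContTree f r t := by
  refine OrderHom.le_gfp (contStep f) (a := fun r t => P r t ∨ ContTree f r t) ?_ r t (.inl h)
  rintro r t (h | h)
  · exact hP r t h
  · exact (contStep f).monotone (fun _ _ => .inr) r t h.unfold

theorem ContTree.mono {r : QS S} {t t' : ℝ} (h : ContTree f r t) (hle : t' ≤ t) :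
    ContTree f r t' :=
  let ⟨τ, hτ, hc, h⟩ := h.unfold
  .fold ⟨τ, hτ, hc, fun σ h1 h2 => h σ h1 (h2.trans_le hle)⟩

/-- `ContTree f p t` with its threshold `τ` recorded: `τ` becomes the radius of continuity
at the image point `p`. -/
def ContState (f : QS S → ℕ) (p : QS S) (τ t : ℝ) : Prop :=
  0 < τ ∧ τ ≤ t ∧ ConstTree f p τ ∧ ∀ σ : S, τ ≤ σ → (σ : ℝ) < t →
    ManyCells p σ fun y => ContTree f y σ

theorem ContTree.exists_contState {r : QS S} {t : ℝ} (h : ContTree f r t) (ht : 0 < t) :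
    ∃ τ, ContState f r τ t := by
  obtain ⟨τ, hτ, hc, h⟩ := h.unfold
  exact ⟨min τ t, lt_min hτ ht, min_le_right _ _, hc.mono (min_le_left _ _),
    fun σ h1 h2 => h σ ((min_le_iff.1 h1).resolve_right h2.not_ge) h2⟩

def ValueDense (f : QS S → ℕ) (v : ℕ) (w : QS S) (T : ℝ) : Prop :=
  ∀ u ∈ ball w T, ∀ t, 0 < t → t ≤ T → ∃ y ∈ ball u t, f y = v

/-- If no value were dense near any point, one could pass to subballs omitting more and more
of the finitely many values. -/
theorem exists_valueDense {F : Finset ℕ} {w : QS S} {T : ℝ} (hT : 0 < T)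
    (hF : ∀ y ∈ ball w T, f y ∈ F) : ∃ r ∈ ball w T, ∃ T' > 0, ValueDense f (f r) r T' := by
  induction F using Finset.strongInduction generalizing w T with
  | H F ih =>
    by_cases hw : ValueDense f (f w) w T
    · exact ⟨w, mem_ball_self w T, T, hT, hw⟩
    simp only [ValueDense, not_forall, not_exists, not_and] at hw
    obtain ⟨u, hu, t, ht, htT, hmiss⟩ := hw
    have hsub := ball_subset_of_mem hu htT
    have hF' : ∀ y ∈ ball u t, f y ∈ F.erase (f w) := fun y hy =>
      Finset.mem_erase.2 ⟨fun h => hmiss y hy h, hF y (hsub hy)⟩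
    obtain ⟨r, hr, hrest⟩ :=
      ih _ (Finset.erase_ssubset (hF w (mem_ball_self w T))) ht hF'
    exact ⟨r, hsub hr, hrest⟩

theorem ValueDense.constTree (hpos : S ⊆ Set.Ioi 0) {r : QS S} {T τ : ℝ}
    (hd : ValueDense f (f r) r T) (hτ : τ ≤ T) : ConstTree f r τ := by
  refine ConstTree.coinduct (fun r' τ' => r' ∈ ball r T ∧ f r' = f r ∧ τ' ≤ T) ?_
    ⟨mem_ball_self r T, rfl, hτ⟩
  rintro r' τ' ⟨hr', hfr', hτ'⟩ σ hσ G
  obtain ⟨b, hb⟩ := Infinite.exists_notMem_finset G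
  have hσT : (σ : ℝ) < T := hσ.trans_le hτ'
  have hu : update r' σ b ∈ ball r T := fun s hs => by
    rw [update_apply_of_ne _ (fun h => (hσT.trans_le hs).ne (by rw [h])) b]
    exact hr' s hs
  obtain ⟨y, hy, hfy⟩ := hd _ hu σ (hpos σ.2) hσT.le
  exact ⟨b, hb, y, hy, hfy.trans hfr'.symm, ball_subset_of_mem hu hσT.le hy, hfy, hσT.le⟩

theorem exists_contTree_of_finite_values (hpos : S ⊆ Set.Ioi 0) {F : Finset ℕ} {w : QS S}
    {T : ℝ} (hT : 0 < T) (hF : ∀ y ∈ ball w T, f y ∈ F) : ∃ r ∈ ball w T, ContTree f r T := by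
  obtain ⟨r, hr, hdense⟩ := exists_valueDense hT hF
  refine ⟨r, hr, ContTree.coinduct (fun r t => 0 < t ∧ (∀ y ∈ ball r t, f y ∈ F) ∧
    ∃ T' > 0, ValueDense f (f r) r T') ?_ ⟨hT, ball_eq_of_mem hr ▸ hF, hdense⟩⟩
  rintro r t ⟨ht, hF, T', hT', hd⟩
  refine ⟨min T' t, lt_min hT' ht, hd.constTree hpos (min_le_left _ _), fun σ _ hσ G => ?_⟩
  obtain ⟨c, hc⟩ := Infinite.exists_notMem_finset G
  have hcell := cell_subset_ball (mem_ball_self r t) hσ c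
  obtain ⟨r', hr', hd'⟩ := exists_valueDense (hpos σ.2) fun y hy => hF y (hcell hy)
  exact ⟨c, hc, r', hr', .inl ⟨hpos σ.2,
    fun y hy => hF y (hcell (by rw [cell, ← ball_eq_of_mem hr']; exact hy)), hd'⟩⟩

/-! ### Tame balls -/

inductive Tame (f : QS S → ℕ) : QS S → S → Prop
  | intro (z : QS S) (σ : S) (F G : Finset ℕ) (g : QS S → S)
      (hlt : ∀ b ∉ G, ∀ y ∈ cell z σ b, f y ∉ F → (g y : ℝ) < σ)
      (htame : ∀ b ∉ G, ∀ y ∈ cell z σ b, f y ∉ F → Tame f y (g y)) : Tame f z σ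

theorem exists_fresh_of_not_tame {z : QS S} {σ : S} (h : ¬ Tame f z σ) (F G : Finset ℕ) :
    ∃ b ∉ G, ∃ y ∈ cell z σ b, f y ∉ F ∧ ∀ σ' : S, (σ' : ℝ) < σ → ¬ Tame f y σ' := by
  by_contra! hc
  have hg : ∀ y, ∃ σ' : S, (∃ b ∉ G, y ∈ cell z σ b) → f y ∉ F →
      (σ' : ℝ) < σ ∧ Tame f y σ' := fun y => by
    by_cases hy : (∃ b ∉ G, y ∈ cell z σ b) ∧ f y ∉ F
    · obtain ⟨⟨b, hb, hyc⟩, hf⟩ := hy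
      obtain ⟨σ', h⟩ := hc b hb y hyc hf
      exact ⟨σ', fun _ _ => h⟩
    · exact ⟨σ, fun h1 h2 => absurd ⟨h1, h2⟩ hy⟩
  choose g hg using hg
  exact h (.intro z σ F G g (fun b hb y hy hf => (hg y ⟨b, hb, hy⟩ hf).1)
    fun b hb y hy hf => (hg y ⟨b, hb, hy⟩ hf).2)

theorem Tame.congr {z z' : QS S} {σ : S} (h : Tame f z σ)
    (hz : ∀ s : S, (σ : ℝ) < s → z.1 s = z'.1 s) : Tame f z' σ := by
  obtain ⟨_, _, F, G, g, hlt, htame⟩ := h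
  exact .intro z' σ F G g (fun b hb y hy => hlt b hb y (cell_congr hz b ▸ hy))
    fun b hb y hy => htame b hb y (cell_congr hz b ▸ hy)

section Harvest

variable {F : Finset ℕ} {g : QS S → S} {C : Set (QS S)}

/-- The coinduction invariant of `HarvestState.contTree`; `g y` is a scale at which the
point `y` is tame, maximal among the points of `ball r t` outside `F`. -/
def HarvestState (f : QS S → ℕ) (F : Finset ℕ) (g : QS S → S) (C : Set (QS S))
    (r : QS S) (t : ℝ) : Prop :=
  ball r t ⊆ C ∧ ∃ y ∈ ball r t, f y ∉ F ∧ (∀ y' ∈ ball r t, f y' ∉ F → (g y' : ℝ) ≤ g y) ∧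
    ContTree f r (g y) ∧ qdist S r y ≤ g y

theorem exists_contTree_or_harvestState (hpos : S ⊆ Set.Ioi 0) (hwo : RevWellOrdered S)
    (hC : ∀ y ∈ C, f y ∉ F → ManyCells y (g y) fun r => ContTree f r (g y))
    {w : QS S} {t : ℝ} (ht : 0 < t) (hwC : ball w t ⊆ C)
    (hg : ∀ y ∈ ball w t, f y ∉ F → (g y : ℝ) < t) :
    ∃ r ∈ ball w t, ContTree f r t ∨ HarvestState f F g C r t := by
  by_cases hall : ∀ y ∈ ball w t, f y ∈ F
  · obtain ⟨r, hr, h⟩ := exists_contTree_of_finite_values hpos ht hall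
    exact ⟨r, hr, .inl h⟩
  push Not at hall
  obtain ⟨yh, ⟨hyh, hfyh⟩, hmax⟩ :=
    hwo.exists_forall_le g (R := {y ∈ ball w t | f y ∉ F}) hall
  obtain ⟨c, -, r, hr, hrt⟩ := hC yh (hwC hyh) hfyh ∅
  have hrw : r ∈ ball w t := cell_subset_ball hyh (hg yh hyh hfyh) c hr
  rw [← ball_eq_of_mem hrw] at hwC hyh
  refine ⟨r, hrw, .inr ⟨hwC, yh, hyh, hfyh, fun y hy hf => hmax y ⟨?_, hf⟩, hrt,
    qdist_comm r yh ▸ qdist_le_of_mem_cell hpos hr⟩⟩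
  rwa [← ball_eq_of_mem hrw]

/-- Coinduction: at scales above the maximal scale `g y`, new branches are found by applying
`exists_contTree_or_harvestState` in the subcells. -/
theorem HarvestState.contTree (hpos : S ⊆ Set.Ioi 0) (hwo : RevWellOrdered S)
    (hC : ∀ y ∈ C, f y ∉ F → ManyCells y (g y) fun r => ContTree f r (g y))
    {r : QS S} {t : ℝ} (h : HarvestState f F g C r t) : ContTree f r t := by
  refine ContTree.coinduct _ ?_ h
  rintro r t ⟨hrC, yh, hyh, hfyh, hmax, hrt, hq⟩
  obtain ⟨τ, hτ, hc, hslots⟩ := hrt.unfold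
  refine ⟨τ, hτ, hc, fun σ h1 h2 => ?_⟩
  rcases lt_trichotomy (σ : ℝ) (g yh) with hlt | heq | hgt
  · exact (hslots σ h1 hlt).mono fun _ => .inr
  · obtain rfl : σ = g yh := Subtype.ext heq
    exact ((hC yh (hrC hyh) hfyh).congr fun s hs => (eq_of_qdist_lt (hq.trans_lt hs)).symm).mono
      fun _ => .inr
  · intro G
    obtain ⟨c, hc⟩ := Infinite.exists_notMem_finset G
    have hcell := cell_subset_ball (mem_ball_self r t) h2 c
    obtain ⟨r', hr', h⟩ := exists_contTree_or_harvestState hpos hwo hC (hpos σ.2)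
      (hcell.trans hrC) fun y hy hf => (hmax y (hcell hy) hf).trans_lt hgt
    exact ⟨c, hc, r', hr', h.symm⟩

theorem Tame.manyCells_contTree (hpos : S ⊆ Set.Ioi 0) (hwo : RevWellOrdered S) {z : QS S}
    {σ : S} (h : Tame f z σ) : ManyCells z σ fun r => ContTree f r σ := by
  induction h with
  | intro z σ F G g hlt _ ih =>
    intro G'
    obtain ⟨b, hb⟩ := Infinite.exists_notMem_finset (G ∪ G')
    rw [Finset.mem_union, not_or] at hb
    have hC : ∀ y ∈ cell z σ b, f y ∉ F → ManyCells y (g y) fun r => ContTree f r (g y) :=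
      ih b hb.1
    obtain ⟨r, hr, h⟩ := exists_contTree_or_harvestState hpos hwo hC (hpos σ.2) subset_rfl
      (hlt b hb.1)
    exact ⟨b, hb.2, r, hr, h.elim id (HarvestState.contTree hpos hwo hC)⟩

end Harvest

/-! ### Truncation -/

theorem exists_minScale {x : QS S} (h : x ≠ 0) :
    ∃ s : S, x.1 s ≠ 0 ∧ ∀ s' : S, x.1 s' ≠ 0 → (s : ℝ) ≤ s' := by
  obtain ⟨s₁, hs₁⟩ := ne_zero_iff.1 h
  obtain ⟨s, hs, hmin⟩ := Set.exists_min_image _ (fun s : S => (s : ℝ)) x.2 ⟨s₁, hs₁⟩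
  exact ⟨s, hs, hmin⟩

noncomputable def minScale (x : QS S) (h : x ≠ 0) : S := (exists_minScale h).choose

theorem apply_minScale_ne_zero {x : QS S} (h : x ≠ 0) : x.1 (minScale x h) ≠ 0 :=
  (exists_minScale h).choose_spec.1

theorem minScale_le {x : QS S} (h : x ≠ 0) {s : S} (hs : x.1 s ≠ 0) :
    (minScale x h : ℝ) ≤ s :=
  (exists_minScale h).choose_spec.2 s hs

theorem apply_eq_zero_of_lt_minScale {x : QS S} (h : x ≠ 0) {s : S}
    (hs : (s : ℝ) < minScale x h) : x.1 s = 0 :=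
  by_contra fun hs0 => (minScale_le h hs0).not_gt hs

/-- `x` with its lowest nonzero coordinate erased; every `x ≠ 0` is a child of `trunc x`
at scale `minScale x`, and iterating reaches `0`. -/
noncomputable def trunc (x : QS S) (h : x ≠ 0) : QS S := update x (minScale x h) 0

theorem trunc_apply_of_ne {x : QS S} (h : x ≠ 0) {s : S} (hs : s ≠ minScale x h) :
    (trunc x h).1 s = x.1 s :=
  update_apply_of_ne x hs 0

theorem trunc_apply_of_lt {x : QS S} (h : x ≠ 0) {s : S} (hs : (minScale x h : ℝ) < s) :
    (trunc x h).1 s = x.1 s :=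
  trunc_apply_of_ne h fun he => hs.ne (by rw [he])

theorem qdist_trunc {x : QS S} (h : x ≠ 0) : qdist S x (trunc x h) = minScale x h :=
  qdist_eq_of_agree_above (by simpa [trunc] using apply_minScale_ne_zero h)
    fun _ hs => (trunc_apply_of_lt h hs).symm

theorem minScale_lt_minScale_trunc {x : QS S} (h : x ≠ 0) (h' : trunc x h ≠ 0) :
    (minScale x h : ℝ) < minScale (trunc x h) h' := by
  have hsupp := apply_minScale_ne_zero h'
  have hne : minScale (trunc x h) h' ≠ minScale x h := fun he => hsupp (by rw [he]; simp [trunc])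
  rw [trunc_apply_of_ne h hne] at hsupp
  exact (minScale_le h hsupp).lt_of_ne fun he => hne (Subtype.ext he.symm)

theorem card_support_trunc_lt {x : QS S} (h : x ≠ 0) :
    (trunc x h).2.toFinset.card < x.2.toFinset.card := by
  refine Finset.card_lt_card ⟨fun s hs => ?_, fun hsub => ?_⟩
  · simp only [Set.Finite.mem_toFinset, Function.mem_support] at hs ⊢
    rcases eq_or_ne s (minScale x h) with rfl | hne
    · simp [trunc] at hs
    · rwa [trunc_apply_of_ne h hne] at hs
  · have := @hsub (minScale x h) (by simpa using apply_minScale_ne_zero h)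
    simp [trunc] at this

@[elab_as_elim]
theorem trunc_induction {motive : QS S → Prop} (zero : motive 0)
    (step : ∀ x (h : x ≠ 0), motive (trunc x h) → motive x) (x : QS S) : motive x :=
  if h : x = 0 then h ▸ zero else step x h (trunc_induction zero step _)
termination_by x.2.toFinset.card
decreasing_by exact card_support_trunc_lt h

/-- `top` plays the role of a scale above all of `S`; the children of `x` in the truncation
tree lie in cells at scales below `clearance top x`. -/
noncomputable def clearance (top : ℝ) (x : QS S) : ℝ :=
  if h : x = 0 then top else minScale x h

@[simp] theorem clearance_zero (top : ℝ) : clearance top (0 : QS S) = top := dif_pos rfl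

theorem clearance_of_ne_zero (top : ℝ) {x : QS S} (h : x ≠ 0) :
    clearance top x = minScale x h := dif_neg h

theorem minScale_lt_clearance_trunc (htop : ∀ s ∈ S, s < top) {x : QS S}
    (h : x ≠ 0) : (minScale x h : ℝ) < clearance top (trunc x h) := by
  by_cases h' : trunc x h = 0
  · simpa [clearance, h'] using htop _ (minScale x h).2
  · rw [clearance_of_ne_zero top h']
    exact minScale_lt_minScale_trunc h h'

theorem countable (hcount : S.Countable) : Countable (QS S) := by
  have := hcount.to_subtype
  refine Function.Injective.countable (f := fun x : QS S => Finsupp.ofSupportFinite x.1 x.2)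
    fun x y hxy => ext fun s => ?_
  simpa [Finsupp.ofSupportFinite_coe] using DFunLike.congr_fun hxy s

/-! ### Building embeddings point by point -/

/-- A finite piece of the embedding under construction: a point, its image, and a radius
attached to the image. -/
abbrev Entry (S : Set ℝ) := QS S × QS S × ℝ

def ParentClosed (l : List (Entry S)) : Prop :=
  ∀ x ∈ l.map Prod.fst, ∀ hx : x ≠ 0, trunc x hx ∈ l.map Prod.fst

theorem ParentClosed.cons {l : List (Entry S)} (hl : ParentClosed l) {x : QS S} (hx : x ≠ 0)
    (hpar : trunc x hx ∈ l.map Prod.fst) (p : QS S) (τ : ℝ) :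
    ParentClosed ((x, p, τ) :: l) := by
  simp only [ParentClosed, List.map_cons, List.mem_cons, forall_eq_or_imp]
  exact ⟨fun _ => .inr hpar, fun y hy hy0 => .inr (hl y hy hy0)⟩

/-- `x` lies on the truncation path of `y`. -/
theorem ParentClosed.mem_of_agree {l : List (Entry S)} (hl : ParentClosed l) {x : QS S}
    (hx : x ≠ 0) {y : QS S} (hy : y ∈ l.map Prod.fst)
    (h : ∀ s : S, (minScale x hx : ℝ) ≤ s → y.1 s = x.1 s) : x ∈ l.map Prod.fst := by
  induction y using trunc_induction with
  | zero => exact absurd (h _ le_rfl).symm (by simpa using apply_minScale_ne_zero hx)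
  | step y hy0 ih =>
    by_cases hyx : y = x
    · exact hyx ▸ hy
    obtain ⟨s, hs⟩ : ∃ s, y.1 s ≠ x.1 s := by
      by_contra! hc
      exact hyx (ext hc)
    have hslt : (s : ℝ) < minScale x hx := lt_of_not_ge fun hle => hs (h s hle)
    have hys : y.1 s ≠ 0 := fun h0 => hs (h0.trans (apply_eq_zero_of_lt_minScale hx hslt).symm)
    have hlt := (minScale_le hy0 hys).trans_lt hslt
    exact ih (hl y hy hy0) fun s' hs' =>
      (trunc_apply_of_lt hy0 (hlt.trans_le hs')).trans (h s' hs')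

theorem ParentClosed.minScale_le_qdist {l : List (Entry S)} (hl : ParentClosed l) {x : QS S}
    (hx : x ≠ 0) (hxl : x ∉ l.map Prod.fst) {y : QS S} (hy : y ∈ l.map Prod.fst) :
    (minScale x hx : ℝ) ≤ qdist S x y :=
  le_of_not_gt fun hlt =>
    hxl (hl.mem_of_agree hx hy fun _ hs => (eq_of_qdist_lt (hlt.trans_le hs)).symm)

section Construction

variable (Inv : List (Entry S) → Prop)

def Extendable : Prop :=
  ∀ l, Inv l → ParentClosed l → ∀ x, ∀ hx : x ≠ 0, x ∉ l.map Prod.fst →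
    trunc x hx ∈ l.map Prod.fst → ∃ p τ, Inv ((x, p, τ) :: l)

abbrev Stage := {l : List (Entry S) // Inv l ∧ ParentClosed l ∧ 0 ∈ l.map Prod.fst}

/-- Adds `x` to the domain of a stage, after adding its truncation path. -/
noncomputable def Stage.insert (hext : Extendable Inv) (x : QS S) (s : Stage Inv) :
    {s' : Stage Inv // s.1 ⊆ s'.1 ∧ x ∈ s'.1.map Prod.fst} :=
  if hx : x = 0 then ⟨s, List.Subset.refl _, hx ▸ s.2.2.2⟩
  else
    let s' := Stage.insert hext (trunc x hx) s
    if hxs : x ∈ s'.1.1.map Prod.fst then ⟨s'.1, s'.2.1, hxs⟩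
    else
      have h := hext _ s'.1.2.1 s'.1.2.2.1 x hx hxs s'.2.2
      ⟨⟨(x, h.choose, h.choose_spec.choose) :: s'.1.1, h.choose_spec.choose_spec,
          s'.1.2.2.1.cons hx s'.2.2 _ _, List.mem_cons_of_mem _ s'.1.2.2.2⟩,
        List.Subset.trans s'.2.1 (List.subset_cons_self _ _), List.mem_cons_self⟩
termination_by x.2.toFinset.card
decreasing_by exact card_support_trunc_lt hx

/-- Enumerate `QS S` and insert the points one after another; any two points then lie in a
common stage. -/
theorem exists_map_of_extendable (hext : Extendable Inv) (hcount : S.Countable)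
    (hinit : ∃ p τ, Inv [(0, p, τ)]) :
    ∃ (e : QS S → QS S) (T : QS S → ℝ),
      ∀ x y, ∃ l, Inv l ∧ (x, e x, T x) ∈ l ∧ (y, e y, T y) ∈ l := by
  have := countable hcount
  obtain ⟨u, hu⟩ := exists_surjective_nat (QS S)
  obtain ⟨p₀, τ₀, h₀⟩ := hinit
  let s₀ : Stage Inv := ⟨[(0, p₀, τ₀)], h₀, by simp [ParentClosed], by simp⟩
  let stage : ℕ → Stage Inv := fun n =>
    Nat.rec s₀ (fun n s => (Stage.insert Inv hext (u n) s).1) n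
  have hmono : Monotone fun n => {e | e ∈ (stage n).1} :=
    monotone_nat_of_le_succ fun n => (Stage.insert Inv hext (u n) (stage n)).2.1
  have hmem : ∀ x, ∃ n, ∃ e ∈ (stage n).1, e.1 = x := fun x => by
    obtain ⟨n, rfl⟩ := hu x
    obtain ⟨e, he, hex⟩ := List.mem_map.1 (Stage.insert Inv hext (u n) (stage n)).2.2
    exact ⟨n + 1, e, he, hex⟩
  choose N E hE hEx using hmem
  refine ⟨fun x => (E x).2.1, fun x => (E x).2.2, fun x y =>
    ⟨(stage (max (N x) (N y))).1, (stage _).2.1, ?_, ?_⟩⟩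
  · rw [show (x, (E x).2) = E x from Prod.ext (hEx x).symm rfl]
    exact hmono (le_max_left _ _) (hE x)
  · rw [show (y, (E y).2) = E y from Prod.ext (hEx y).symm rfl]
    exact hmono (le_max_right _ _) (hE y)

end Construction

def Isometric (l : List (Entry S)) : Prop :=
  ∀ e ∈ l, ∀ e' ∈ l, qdist S e.2.1 e'.2.1 = qdist S e.1 e'.1

def cellIndices (l : List (Entry S)) (σ : S) : Finset ℕ := (l.map fun e => e.2.1.1 σ).toFinset

theorem apply_ne_of_notMem_cellIndices {l : List (Entry S)} {σ : S} {b : ℕ}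
    (hb : b ∉ cellIndices l σ) {e : Entry S} (he : e ∈ l) : e.2.1.1 σ ≠ b :=
  fun h => hb (List.mem_toFinset.2 (List.mem_map.2 ⟨e, he, h⟩))

/-- Mapping `x` into a fresh cell of the image of its parent `trunc x` preserves distances:
points at distance `> minScale x` from `x` see `x` as they see its parent, and the others
lie in the cells of the parent's ball at that scale that are already used. -/
theorem qdist_eq_of_mem_fresh_cell (hpos : S ⊆ Set.Ioi 0) {l : List (Entry S)}
    (hl : Isometric l) (hpc : ParentClosed l) {x : QS S} (hx : x ≠ 0)
    (hxl : x ∉ l.map Prod.fst) {ep : Entry S} (hep : ep ∈ l) (hepx : ep.1 = trunc x hx)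
    {p : QS S} {b : ℕ} (hp : p ∈ cell ep.2.1 (minScale x hx) b)
    (hb : b ∉ cellIndices l (minScale x hx)) {e : Entry S} (he : e ∈ l) :
    qdist S p e.2.1 = qdist S x e.1 := by
  set σ := minScale x hx
  have hxep : qdist S x ep.1 = σ := hepx ▸ qdist_trunc hx
  have hpep : qdist S ep.2.1 p = σ :=
    qdist_eq_of_mem_cell (apply_ne_of_notMem_cellIndices hb hep) (mem_cell_apply _ _) hp
  rcases (hpc.minScale_le_qdist hx hxl (List.mem_map_of_mem he)).lt_or_eq with hlt | heq
  · have h1 : qdist S ep.1 e.1 = qdist S x e.1 :=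
      qdist_eq_of_lt hpos (by rwa [qdist_comm, hxep])
    rw [← h1, ← hl ep hep e he]
    exact qdist_eq_of_lt hpos (by rwa [qdist_comm, hpep, hl ep hep e he, h1])
  · have hle : qdist S ep.2.1 e.2.1 ≤ σ := by
      rw [hl ep hep e he]
      refine (qdist_le_max hpos _ x _).trans (max_le ?_ heq.ge)
      rw [qdist_comm, hxep]
    have hecell : e.2.1 ∈ cell ep.2.1 σ (e.2.1.1 σ) := by
      rw [cell_eq_of_qdist_le hle]
      exact mem_cell_apply _ _
    rw [qdist_eq_of_mem_cell (apply_ne_of_notMem_cellIndices hb he).symm hp hecell, heq]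

theorem Isometric.cons (hpos : S ⊆ Set.Ioi 0) {l : List (Entry S)} (hl : Isometric l)
    (hpc : ParentClosed l) {x : QS S} (hx : x ≠ 0) (hxl : x ∉ l.map Prod.fst) {ep : Entry S}
    (hep : ep ∈ l) (hepx : ep.1 = trunc x hx) {p : QS S} {b : ℕ}
    (hp : p ∈ cell ep.2.1 (minScale x hx) b) (hb : b ∉ cellIndices l (minScale x hx))
    (τ : ℝ) : Isometric ((x, p, τ) :: l) := by
  have h := fun e (he : e ∈ l) => qdist_eq_of_mem_fresh_cell hpos hl hpc hx hxl hep hepx hp hb he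
  simp only [Isometric, List.mem_cons, forall_eq_or_imp, qdist_self, true_and]
  exact ⟨h, fun e he => ⟨by rw [qdist_comm, h e he, qdist_comm], hl e he⟩⟩

theorem isCopyOfQS_range (hpos : S ⊆ Set.Ioi 0) {e : QS S → QS S}
    (he : ∀ x y, qdist S (e x) (e y) = qdist S x y) : IsCopyOfQS S (Set.range e) := by
  refine ⟨e, fun x y hxy => ?_, rfl, he⟩
  by_contra hne
  have := he x y
  rw [hxy, qdist_self] at this
  exact (qdist_pos hpos hne).ne this

/-! ### The two copies -/

def Wild (f : QS S → ℕ) (p : QS S) (t : ℝ) : Prop := ∀ σ : S, (σ : ℝ) < t → ¬ Tame f p σ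

def InjInv (f : QS S → ℕ) (top : ℝ) (l : List (Entry S)) : Prop :=
  Isometric l ∧ (∀ e ∈ l, ∀ e' ∈ l, e.1 ≠ e'.1 → f e.2.1 ≠ f e'.2.1) ∧
    ∀ e ∈ l, Wild f e.2.1 (clearance top e.1)

theorem InjInv.extendable (hpos : S ⊆ Set.Ioi 0) (htop : ∀ s ∈ S, s < top) :
    Extendable (InjInv f top) := by
  intro l hl hpc x hx hxl hpar
  obtain ⟨hiso, hinj, hwild⟩ := hl
  obtain ⟨ep, hep, hepx⟩ := List.mem_map.1 hpar
  have hσ : (minScale x hx : ℝ) < clearance top ep.1 :=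
    hepx ▸ minScale_lt_clearance_trunc htop hx
  obtain ⟨b, hb, p, hp, hfp, hpw⟩ := exists_fresh_of_not_tame (hwild ep hep _ hσ)
    (l.map fun e => f e.2.1).toFinset (cellIndices l (minScale x hx))
  have hfresh : ∀ e ∈ l, f e.2.1 ≠ f p := fun e he h =>
    hfp (List.mem_toFinset.2 (List.mem_map.2 ⟨e, he, h⟩))
  refine ⟨p, 0, hiso.cons hpos hpc hx hxl hep hepx hp hb 0, ?_, ?_⟩
  · simp only [List.mem_cons, forall_eq_or_imp]
    exact ⟨⟨fun h => absurd rfl h, fun e he _ => (hfresh e he).symm⟩,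
      fun e he => ⟨fun _ => hfresh e he, hinj e he⟩⟩
  · simp only [List.mem_cons, forall_eq_or_imp]
    exact ⟨by rwa [clearance_of_ne_zero top hx], hwild⟩

theorem exists_injOn_copy (hpos : S ⊆ Set.Ioi 0) (hcount : S.Countable)
    (htop : ∀ s ∈ S, s < top) {r : QS S} (hr : Wild f r top) :
    ∃ X : Set (QS S), IsCopyOfQS S X ∧ Set.InjOn f X := by
  have hinit : InjInv f top [(0, r, 0)] := by
    simpa [InjInv, Isometric] using hr
  obtain ⟨e, T, hpair⟩ :=
    exists_map_of_extendable (InjInv f top) (InjInv.extendable hpos htop) hcount ⟨r, 0, hinit⟩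
  have hiso : ∀ x y, qdist S (e x) (e y) = qdist S x y := fun x y =>
    let ⟨_, h, hx, hy⟩ := hpair x y
    h.1 _ hx _ hy
  refine ⟨_, isCopyOfQS_range hpos hiso, ?_⟩
  rintro _ ⟨x, rfl⟩ _ ⟨y, rfl⟩ hfxy
  by_contra hne
  obtain ⟨_, h, hx, hy⟩ := hpair x y
  exact h.2.1 _ hx _ hy (fun hxy : x = y => hne (by rw [hxy])) hfxy

/-- A child of `pp` at a scale `σ` below `τp` continues the `f`-constant tree of `pp`;
at scales `σ ≥ τp` it is taken from a branch of the continuity tree of `pp`. -/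
theorem ContState.exists_child (hpos : S ⊆ Set.Ioi 0) {pp : QS S} {τp t : ℝ}
    (hst : ContState f pp τp t) {σ : S} (hσ : (σ : ℝ) < t) (G : Finset ℕ) :
    ∃ b ∉ G, ∃ p ∈ cell pp σ b, ∃ τ, ContState f p τ σ ∧
      ((σ : ℝ) < τp → f p = f pp ∧ τ = σ) := by
  rcases lt_or_ge (σ : ℝ) τp with hlock | hopen
  · obtain ⟨b, hb, p, hp, hfp, hc⟩ := hst.2.2.1.unfold σ hlock G
    exact ⟨b, hb, p, hp, σ, ⟨hpos σ.2, le_rfl, hc, fun _ h1 h2 => absurd h2 h1.not_gt⟩,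
      fun _ => ⟨hfp, rfl⟩⟩
  · obtain ⟨b, hb, p, hp, hc⟩ := hst.2.2.2 σ hopen hσ G
    obtain ⟨τ, hτ⟩ := hc.exists_contState (hpos σ.2)
    exact ⟨b, hb, p, hp, τ, hτ, fun h => absurd h hopen.not_gt⟩

/-- `e.2.2` is the radius of continuity at `e.2.1`. The last clause records that the points
within that distance of `e.1` were placed inside the `f`-constant tree of `e.2.1`, which is why
their own radius equals their clearance. -/
def ContInv (f : QS S → ℕ) (top : ℝ) (l : List (Entry S)) : Prop :=
  (l.map Prod.fst).Nodup ∧ Isometric l ∧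
    (∀ e ∈ l, ContState f e.2.1 e.2.2 (clearance top e.1)) ∧
    ∀ e ∈ l, ∀ e' ∈ l, e.1 ≠ e'.1 → qdist S e.1 e'.1 < e.2.2 →
      f e'.2.1 = f e.2.1 ∧ e'.2.2 = clearance top e'.1

/-- A new point `x` close to an old point `e.1` forces its parent entry into the
`f`-constant regime of `e`. -/
theorem ContInv.lock_of_qdist_lt (hpos : S ⊆ Set.Ioi 0) (htop : ∀ s ∈ S, s < top)
    {l : List (Entry S)} (hl : ContInv f top l) (hpc : ParentClosed l) {x : QS S}
    (hx : x ≠ 0) (hxl : x ∉ l.map Prod.fst) {ep : Entry S} (hep : ep ∈ l)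
    (hepx : ep.1 = trunc x hx) {e : Entry S} (he : e ∈ l) (hd : qdist S e.1 x < e.2.2) :
    (minScale x hx : ℝ) < ep.2.2 ∧ f ep.2.1 = f e.2.1 := by
  obtain ⟨hnd, -, -, hlock⟩ := hl
  have hσd : (minScale x hx : ℝ) ≤ qdist S e.1 x :=
    qdist_comm x e.1 ▸ hpc.minScale_le_qdist hx hxl (List.mem_map_of_mem he)
  by_cases heq : e.1 = ep.1
  · obtain rfl : e = ep := List.inj_on_of_nodup_map hnd he hep heq
    exact ⟨hσd.trans_lt hd, rfl⟩
  have hxep : qdist S x ep.1 = minScale x hx := hepx ▸ qdist_trunc hx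
  obtain ⟨hf, hτ⟩ := hlock e he ep hep heq
    ((qdist_le_max hpos _ x _).trans_lt (max_lt hd (hxep ▸ hσd.trans_lt hd)))
  exact ⟨hτ ▸ hepx ▸ minScale_lt_clearance_trunc htop hx, hf⟩

theorem ContInv.extendable (hpos : S ⊆ Set.Ioi 0) (htop : ∀ s ∈ S, s < top) :
    Extendable (ContInv f top) := by
  intro l hl hpc x hx hxl hpar
  obtain ⟨ep, hep, hepx⟩ := List.mem_map.1 hpar
  obtain ⟨b, hb, p, hp, τ, hst, hmode⟩ := (hl.2.2.1 ep hep).exists_child hpos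
    (hepx ▸ minScale_lt_clearance_trunc htop hx) (cellIndices l (minScale x hx))
  refine ⟨p, τ, List.nodup_cons.2 ⟨hxl, hl.1⟩, hl.2.1.cons hpos hpc hx hxl hep hepx hp hb τ,
    ?_, ?_⟩
  · simp only [List.mem_cons, forall_eq_or_imp]
    exact ⟨by rwa [clearance_of_ne_zero top hx], hl.2.2.1⟩
  simp only [List.mem_cons, forall_eq_or_imp]
  refine ⟨⟨fun h => absurd rfl h, fun e' he' _ hd => ?_⟩,
    fun e he => ⟨fun _ hd => ?_, hl.2.2.2 e he⟩⟩
  · exact absurd (hd.trans_le hst.2.1)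
      (hpc.minScale_le_qdist hx hxl (List.mem_map_of_mem he')).not_gt
  · obtain ⟨hlt, hf⟩ := hl.lock_of_qdist_lt hpos htop hpc hx hxl hep hepx he hd
    obtain ⟨hfp, rfl⟩ := hmode hlt
    exact ⟨hfp.trans hf, (clearance_of_ne_zero top hx).symm⟩

theorem exists_continuous_copy (hpos : S ⊆ Set.Ioi 0) (hcount : S.Countable)
    (htop : ∀ s ∈ S, s < top) (htop₀ : 0 < top) {r : QS S} (hr : ContTree f r top) :
    ∃ X : Set (QS S), IsCopyOfQS S X ∧
      ∀ x ∈ X, ∃ ε > (0 : ℝ), ∀ y ∈ X, qdist S x y < ε → f y = f x := by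
  obtain ⟨τ, hτ⟩ := hr.exists_contState htop₀
  have hinit : ContInv f top [(0, r, τ)] := by
    simpa [ContInv, Isometric] using hτ
  obtain ⟨e, T, hpair⟩ :=
    exists_map_of_extendable (ContInv f top) (ContInv.extendable hpos htop) hcount ⟨r, τ, hinit⟩
  have hiso : ∀ x y, qdist S (e x) (e y) = qdist S x y := fun x y =>
    let ⟨_, h, hx, hy⟩ := hpair x y
    h.2.1 _ hx _ hy
  refine ⟨_, isCopyOfQS_range hpos hiso, ?_⟩
  rintro _ ⟨x, rfl⟩
  obtain ⟨_, h, hx, -⟩ := hpair x x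
  refine ⟨T x, (h.2.2.1 _ hx).1, ?_⟩
  rintro _ ⟨y, rfl⟩ hd
  rcases eq_or_ne x y with rfl | hne
  · rfl
  obtain ⟨_, h, hx, hy⟩ := hpair x y
  exact (h.2.2.2 _ hx _ hy hne (hiso x y ▸ hd)).1

/-- At the largest scale `s₀` of `S` all balls coincide, so tameness at `s₀` does not depend
on the center. -/
theorem exists_contTree_or_wild (hpos : S ⊆ Set.Ioi 0) (hwo : RevWellOrdered S) {s₀ : S}
    (hmax : ∀ s ∈ S, s ≤ (s₀ : ℝ)) (f : QS S → ℕ) :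
    (∃ r, ContTree f r (s₀ + 1)) ∨ ∃ r, Wild f r (s₀ + 1) := by
  have hagree : ∀ z z' : QS S, ∀ s : S, (s₀ : ℝ) < s → z.1 s = z'.1 s :=
    fun _ _ s hs => absurd (hmax s s.2) hs.not_ge
  by_cases hB : Tame f 0 s₀
  · have hmany := hB.manyCells_contTree hpos hwo
    obtain ⟨-, -, r, -, hr⟩ := hmany ∅
    obtain ⟨τ, hτ, hc, hslots⟩ := hr.unfold
    refine .inl ⟨r, .fold ⟨τ, hτ, hc, fun σ h1 h2 => ?_⟩⟩
    rcases (hmax σ σ.2).lt_or_eq with hlt | heq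
    · exact hslots σ h1 hlt
    · obtain rfl : σ = s₀ := Subtype.ext heq
      exact hmany.congr (hagree 0 r)
  · obtain ⟨-, -, r, -, -, hr⟩ := exists_fresh_of_not_tame hB ∅ ∅
    refine .inr ⟨r, fun σ hσ hT => ?_⟩
    rcases (hmax σ σ.2).lt_or_eq with hlt | heq
    · exact hr σ hlt hT
    · obtain rfl : σ = s₀ := Subtype.ext heq
      exact hB (hT.congr (hagree r 0))

end QS

/-- If `S ⊆ (0,∞)` is infinite countable and `>`
well-orders `S`, then for every `f : Q_S → ℕ` there is an isometric copy `X`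
of `Q_S` inside `Q_S` on which `f` is continuous (into discrete `ℕ`,
i.e. locally constant on `X`) or injective. -/
theorem stmt3 (S : Set ℝ) (hpos : S ⊆ Set.Ioi 0) (hcount : S.Countable)
    (hinf : S.Infinite) (hwo : RevWellOrdered S) (f : QS S → ℕ) :
    ∃ X : Set (QS S), IsCopyOfQS S X ∧
      ((∀ x ∈ X, ∃ ε > (0:ℝ), ∀ y ∈ X, qdist S x y < ε → f y = f x) ∨
        Set.InjOn f X) := by
  obtain ⟨s₀, hs₀, hmax⟩ := hwo S subset_rfl hinf.nonempty
  have htop : ∀ s ∈ S, s < s₀ + 1 := fun s hs => (hmax s hs).trans_lt (lt_add_one _)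
  rcases QS.exists_contTree_or_wild hpos hwo (s₀ := ⟨s₀, hs₀⟩) hmax f with ⟨r, hr⟩ | ⟨r, hr⟩
  · obtain ⟨X, hX, hcont⟩ :=
      QS.exists_continuous_copy hpos hcount htop (add_pos (hpos hs₀) one_pos) hr
    exact ⟨X, hX, .inl hcont⟩
  · obtain ⟨X, hX, hinj⟩ := QS.exists_injOn_copy hpos hcount htop hr
    exact ⟨X, hX, .inr hinj⟩
end

section
/- Let S ⊆ (0,∞) be a finite nonempty set of positive reals. Then every nonempty finite subset X of Q_S has a big Ramsey degree in U_S: there is a least positive integer l such that for every positive integer k and every coloring χ of the set of isometric copies of X in Q_S with k colors, there is an isometric copy Q̃ of Q_S inside Q_S such that χ takes at most l values on the isometric copies of X contained in Q̃. -/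
/-! For finite `S`, a copy `Y` of `X` takes at most `r = |X| · |S|` values, so it lies in an
`r`-set `G ⊆ ℕ` and is determined by `G` and its pattern `τ ⊆ S → Fin r` (the positions of its
values inside `G`). Colour each `r`-set `G` by the map `τ ↦ χ (Y_{G,τ})`; these colours form a
finite set, so the infinite Ramsey theorem gives an infinite `N ⊆ ℕ` all of whose `r`-subsets
get one colour `c`. Relabelling values by an injection `ℕ → N` embeds `Q_S` isometrically into
itself, and on the image `χ` only takes values in the range of `c`, of size at most the number
of patterns. -/

lemma exists_strictMono_of_forall_infinite {Q : ℕ → Set ℕ → Prop}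
    (hQ : ∀ a {N N' : Set ℕ}, N' ⊆ N → Q a N → Q a N')
    (step : ∀ M : Set ℕ, M.Infinite → ∃ N ⊆ M \ Set.Iic (sInf M), N.Infinite ∧ Q (sInf M) N)
    {M : Set ℕ} (hM : M.Infinite) :
    ∃ a : ℕ → ℕ, StrictMono a ∧ Set.range a ⊆ M ∧ ∀ i, Q (a i) (a '' Set.Ioi i) := by
  choose next hnext_sub hnext_inf hnext_Q using step
  let seq : ℕ → {N : Set ℕ // N.Infinite} := fun i =>
    Nat.rec ⟨M, hM⟩ (fun _ N => ⟨next N.1 N.2, hnext_inf N.1 N.2⟩) i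
  let a : ℕ → ℕ := fun i => sInf (seq i).1
  have hsucc : ∀ i, (seq (i + 1)).1 ⊆ (seq i).1 \ Set.Iic (a i) := fun i =>
    hnext_sub (seq i).1 (seq i).2
  have hanti : Antitone fun i => (seq i).1 :=
    antitone_nat_of_succ_le fun i => (hsucc i).trans Set.sdiff_subset
  have hmem : ∀ i, a i ∈ (seq i).1 := fun i => Nat.sInf_mem (seq i).2.nonempty
  refine ⟨a, strictMono_nat_of_lt_succ fun i => ?_, ?_, fun i => ?_⟩
  · simpa using (hsucc i (hmem (i + 1))).2
  · rintro _ ⟨i, rfl⟩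
    exact hanti (Nat.zero_le i) (hmem i)
  · refine hQ _ ?_ (hnext_Q (seq i).1 (seq i).2)
    rintro _ ⟨j, hij, rfl⟩
    exact hanti (Nat.succ_le_of_lt hij) (hmem j)

theorem exists_infinite_monochromatic {C : Type*} [Finite C] (r : ℕ) (χ : Finset ℕ → C)
    {M : Set ℕ} (hM : M.Infinite) :
    ∃ N ⊆ M, N.Infinite ∧ ∃ c, ∀ G : Finset ℕ, ↑G ⊆ N → G.card = r → χ G = c := by
  induction r generalizing χ M with
  | zero => exact ⟨M, subset_rfl, hM, χ ∅, fun G _ hG => by rw [Finset.card_eq_zero.1 hG]⟩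
  | succ r ih =>
    obtain ⟨a, ha, haM, hQ⟩ := exists_strictMono_of_forall_infinite
      (Q := fun a N => ∃ c, ∀ G : Finset ℕ, ↑G ⊆ N → G.card = r → χ (insert a G) = c)
      (fun _ _ _ hN' ⟨c, hc⟩ => ⟨c, fun G hG => hc G (hG.trans hN')⟩)
      (fun M' hM' => ih _ (hM'.sdiff (Set.finite_Iic _))) hM
    choose col hcol using hQ
    obtain ⟨c, hc⟩ := Finite.exists_infinite_fiber col
    refine ⟨a '' (col ⁻¹' {c}), (Set.image_subset_range _ _).trans haM,
      (Set.infinite_coe_iff.1 hc).image ha.injective.injOn, c, fun G hG hcard => ?_⟩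
    have hGne : G.Nonempty := Finset.card_pos.1 (by omega)
    obtain ⟨i, hi, hia⟩ := hG (G.min'_mem hGne)
    have hmin : a i ∈ G := hia ▸ G.min'_mem hGne
    have hrest : ↑(G.erase (a i)) ⊆ a '' Set.Ioi i := by
      intro x hx
      obtain ⟨j, -, rfl⟩ := hG (Finset.mem_of_mem_erase hx)
      refine ⟨j, ha.lt_iff_lt.1 (lt_of_le_of_ne ?_ (Finset.ne_of_mem_erase hx).symm), rfl⟩
      exact hia ▸ G.min'_le _ (Finset.mem_of_mem_erase hx)
    rw [← Finset.insert_erase hmin,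
      hcol i _ hrest (by rw [Finset.card_erase_of_mem hmin, hcard]; rfl)]
    exact hi

lemma Set.Infinite.exists_finset_superset_card_eq {α : Type*} [DecidableEq α] {N : Set α}
    (hN : N.Infinite) {G₀ : Finset α} (hG₀ : ↑G₀ ⊆ N) {r : ℕ} (hr : G₀.card ≤ r) :
    ∃ G : Finset α, G₀ ⊆ G ∧ ↑G ⊆ N ∧ G.card = r := by
  obtain ⟨t, htN, ht⟩ := (hN.sdiff G₀.finite_toSet).exists_subset_card_eq (r - G₀.card)
  have hdisj : Disjoint G₀ t :=
    Finset.disjoint_left.2 fun x hx hxt => (htN hxt).2 hx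
  refine ⟨G₀ ∪ t, Finset.subset_union_left, ?_, ?_⟩
  · rw [Finset.coe_union]
    exact Set.union_subset hG₀ (htN.trans Set.sdiff_subset)
  · rw [Finset.card_union_of_disjoint hdisj, ht]
    omega

lemma IsCopyIn.finite {S S' : Set ℝ} {X : Set (QS S)} {Y : Set (QS S')} (h : IsCopyIn S S' X Y)
    (hX : X.Finite) : Y.Finite := by
  obtain ⟨e, -, rfl, -⟩ := h
  have := hX.to_subtype
  exact Set.finite_range e

lemma IsCopyIn.ncard_eq {S S' : Set ℝ} {X : Set (QS S)} {Y : Set (QS S')}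
    (h : IsCopyIn S S' X Y) : Y.ncard = X.ncard := by
  obtain ⟨e, he, rfl, -⟩ := h
  rw [← Set.image_univ, Set.ncard_image_of_injective _ he, Set.ncard_univ, Nat.card_coe_set_eq]

namespace QS

variable {S : Set ℝ} [Finite S]

def ofFun (x : S → ℕ) : QS S := ⟨x, Set.toFinite _⟩

lemma qdist_ofFun_comp {g : ℕ → ℕ} (hg : Function.Injective g) (x y : QS S) :
    qdist S (ofFun (g ∘ x.1)) (ofFun (g ∘ y.1)) = qdist S x y := by
  unfold qdist
  congr 2
  ext s
  exact not_congr hg.eq_iff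

lemma isCopyOfQS_range_ofFun_comp {g : ℕ → ℕ} (hg : Function.Injective g) :
    IsCopyOfQS S (Set.range fun x : QS S => ofFun (g ∘ x.1)) :=
  ⟨_, fun _ _ hxy => Subtype.ext (funext fun s => hg (congrFun (congrArg Subtype.val hxy) s)),
    rfl, qdist_ofFun_comp hg⟩

def ofPattern {G : Finset ℕ} {r : ℕ} (h : G.card = r) (ρ : S → Fin r) : QS S :=
  ofFun fun s => G.orderEmbOfFin h (ρ s)

lemma exists_image_ofPattern_eq {G : Finset ℕ} {r : ℕ} (h : G.card = r) {Y : Set (QS S)}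
    (hY : ∀ y ∈ Y, ∀ s, y.1 s ∈ G) : ∃ τ : Set (S → Fin r), ofPattern h '' τ = Y := by
  refine ⟨_, Set.image_preimage_eq_of_subset fun y hy => ?_⟩
  have hval : ∀ s, y.1 s ∈ Set.range (G.orderEmbOfFin h) := by
    rw [Finset.range_orderEmbOfFin]
    exact hY y hy
  choose ρ hρ using hval
  exact ⟨ρ, Subtype.ext (funext hρ)⟩

lemma exists_finset_card_eq_values_subset {Y : Set (QS S)} (hY : Y.Finite) {N : Set ℕ}
    (hN : N.Infinite) (hYN : ∀ y ∈ Y, ∀ s, y.1 s ∈ N) {r : ℕ} (hr : Y.ncard * Nat.card S ≤ r) :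
    ∃ G : Finset ℕ, ↑G ⊆ N ∧ G.card = r ∧ ∀ y ∈ Y, ∀ s, y.1 s ∈ G := by
  have := Fintype.ofFinite S
  let V : Finset ℕ := hY.toFinset.biUnion fun y => Finset.univ.image y.1
  have hVN : ↑V ⊆ N := by
    intro v hv
    simp only [V, Finset.coe_biUnion, Set.mem_iUnion, Finset.mem_coe, Finset.mem_image,
      Finset.mem_univ, true_and, Set.Finite.mem_toFinset] at hv
    obtain ⟨y, hy, s, rfl⟩ := hv
    exact hYN y hy s
  have hVcard : V.card ≤ r := by
    refine (Finset.card_biUnion_le_card_mul _ _ (Fintype.card S) fun y _ => ?_).trans ?_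
    · exact Finset.card_image_le.trans_eq Finset.card_univ
    · rwa [← Set.ncard_eq_toFinset_card _ hY, ← Nat.card_eq_fintype_card]
  obtain ⟨G, hVG, hGN, hGcard⟩ := hN.exists_finset_superset_card_eq hVN hVcard
  refine ⟨G, hGN, hGcard, fun y hy s => hVG ?_⟩
  simp only [V, Finset.mem_biUnion, Finset.mem_image, Finset.mem_univ, true_and,
    Set.Finite.mem_toFinset]
  exact ⟨y, hy, s, rfl⟩

end QS

open QS in
theorem brdBound_of_finite {S : Set ℝ} (hS : S.Finite) {X : Set (QS S)} (hX : X.Finite) :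
    BRDbound S S X (Nat.card (Set (S → Fin (X.ncard * Nat.card S)))) := by
  have := hS.to_subtype
  set r := X.ncard * Nat.card S
  intro k hk χ
  obtain ⟨N, -, hN, c, hc⟩ := exists_infinite_monochromatic r
    (fun G => if h : G.card = r then fun τ : Set (S → Fin r) => χ (ofPattern h '' τ)
      else fun _ => (⟨0, hk⟩ : Fin k)) Set.infinite_univ
  let g : ℕ → ℕ := Subtype.val ∘ hN.natEmbedding N
  have hg : Function.Injective g := Subtype.val_injective.comp (hN.natEmbedding N).injective
  refine ⟨_, isCopyOfQS_range_ofFun_comp hg, ?_⟩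
  calc _ ≤ (Set.range c).ncard := Set.ncard_le_ncard ?_ (Set.toFinite _)
    _ ≤ _ := by rw [← Nat.card_coe_set_eq]; exact Finite.card_range_le c
  rintro _ ⟨Y, ⟨hXY, hYQ⟩, rfl⟩
  have hYN : ∀ y ∈ Y, ∀ s, y.1 s ∈ N := by
    intro y hy s
    obtain ⟨x, rfl⟩ := hYQ hy
    exact (hN.natEmbedding N (x.1 s)).2
  obtain ⟨G, hGN, hGcard, hYG⟩ := exists_finset_card_eq_values_subset (hXY.finite hX) hN hYN
    (by rw [hXY.ncard_eq])
  obtain ⟨τ, rfl⟩ := exists_image_ofPattern_eq hGcard hYG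
  have hcG := congrFun (hc G hGN hGcard) τ
  rw [dif_pos hGcard] at hcG
  exact ⟨τ, hcG.symm⟩

theorem stmt4_general (S : Set ℝ) (hfin : S.Finite) (X : Set (QS S)) (hX : X.Finite) :
    ∃ l : ℕ, HasBigRamseyDegree S S X l :=
  have := hfin.to_subtype
  ⟨_, isLeast_csInf ⟨_, Nat.card_pos, brdBound_of_finite hfin hX⟩⟩

/-- If `S ⊆ (0,∞)` is finite nonempty, every nonempty finite
subset `X` of `Q_S` has a big Ramsey degree in `U_S`. -/
theorem stmt4 (S : Set ℝ) (hpos : S ⊆ Set.Ioi 0) (hfin : S.Finite)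
    (hne : S.Nonempty) (X : Set (QS S)) (hX : X.Finite) (hXne : X.Nonempty) :
    ∃ l : ℕ, HasBigRamseyDegree S S X l :=
  stmt4_general S hfin X hX
end

section
/- Let S ⊆ (0,∞) be a countable set of positive reals. Then Q_S is universal for U_S: a finite metric space X embeds isometrically into Q_S if and only if X is an ultrametric space all of whose nonzero distances lie in S. -/
/-- The set of coordinates where `x` and `y` differ is finite. -/
lemma qs_diff_finite {S : Set ℝ} (x y : QS S) :
    (Subtype.val '' {s : S | x.1 s ≠ y.1 s}).Finite := by
  apply Set.Finite.image
  apply Set.Finite.subset (x.2.union y.2)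
  intro s hs
  rcases eq_or_ne (x.1 s) 0 with h | h
  · exact Or.inr fun h' => hs (h.trans h'.symm)
  · exact Or.inl h

/-- If `x ≠ y` (as functions), the distance is attained. -/
lemma qdist_mem {S : Set ℝ} (x y : QS S) (h : x.1 ≠ y.1) :
    qdist S x y ∈ Subtype.val '' {s : S | x.1 s ≠ y.1 s} := by
  obtain ⟨s, hs⟩ := Function.ne_iff.mp h
  exact Set.Nonempty.csSup_mem ⟨_, ⟨s, hs, rfl⟩⟩ (qs_diff_finite x y)

/-- `Q_S` is universal for `U_S`: a finite metric space `X`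
embeds isometrically into `Q_S` iff `X` is ultrametric with all nonzero
distances in `S`. -/
theorem stmt10 (S : Set ℝ) (hpos : S ⊆ Set.Ioi 0) (hcount : S.Countable)
    (X : Type*) [MetricSpace X] [Finite X] :
    (∃ e : X → QS S, ∀ a b : X, qdist S (e a) (e b) = dist a b) ↔
    ((∀ a b c : X, dist a c ≤ max (dist a b) (dist b c)) ∧
      ∀ a b : X, dist a b ≠ 0 → dist a b ∈ S) := by
  constructor
  · rintro ⟨e, he⟩
    constructor
    · intro a b c
      rcases eq_or_ne ((e a).1) ((e c).1) with h | h
      · rw [← he a c]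
        have hempty : {s : S | (e a).1 s ≠ (e c).1 s} = ∅ := by
          ext s; simp [h]
        rw [qdist, hempty]
        simp only [Set.image_empty, Real.sSup_empty]
        exact le_max_of_le_left dist_nonneg
      · obtain ⟨s, hs, hq⟩ := qdist_mem (e a) (e c) h
        rw [← he a c, ← hq]
        rcases ne_or_eq ((e a).1 s) ((e b).1 s) with h1 | h1
        · have hle : (s : ℝ) ≤ qdist S (e a) (e b) :=
            le_csSup (qs_diff_finite (e a) (e b)).bddAbove ⟨s, h1, rfl⟩
          rw [he a b] at hle
          exact le_max_of_le_left hle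
        · have h2 : (e b).1 s ≠ (e c).1 s := fun h2 => hs (h1.trans h2)
          have hle : (s : ℝ) ≤ qdist S (e b) (e c) :=
            le_csSup (qs_diff_finite (e b) (e c)).bddAbove ⟨s, h2, rfl⟩
          rw [he b c] at hle
          exact le_max_of_le_right hle
    · intro a b hab
      rcases eq_or_ne ((e a).1) ((e b).1) with h | h
      · exfalso
        apply hab
        rw [← he a b]
        have hempty : {s : S | (e a).1 s ≠ (e b).1 s} = ∅ := by
          ext s; simp [h]
        rw [qdist, hempty]
        simp [Real.sSup_empty]
      · obtain ⟨s, _, hq⟩ := qdist_mem (e a) (e b) h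
        rw [← he a b, ← hq]
        exact s.2
  · rintro ⟨hult, hSd⟩
    rcases isEmpty_or_nonempty X with hE | hN
    · exact ⟨fun a => hE.elim a, fun a => hE.elim a⟩
    classical
    obtain ⟨g, hg⟩ := Countable.exists_injective_nat X
    set D : Set ℝ := {d | d ≠ 0 ∧ ∃ a b : X, dist a b = d} with hD
    have hDfin : D.Finite := by
      apply Set.Finite.subset (Set.finite_range fun p : X × X => dist p.1 p.2)
      rintro d ⟨_, a, b, rfl⟩
      exact ⟨(a, b), rfl⟩
    have hDS : D ⊆ S := by
      rintro d ⟨hd0, a, b, rfl⟩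
      exact hSd a b hd0
    have hex : ∀ (a : X) (s : ℝ), 0 < s → ∃ n, ∃ c : X, g c = n ∧ dist a c < s :=
      fun a s hs => ⟨g a, a, rfl, by simpa using hs⟩
    have hfind : ∀ (a b : X) (s : ℝ) (hs : 0 < s),
        (Nat.find (hex a s hs) = Nat.find (hex b s hs) ↔ dist a b < s) := by
      intro a b s hs
      constructor
      · intro h
        obtain ⟨c, hc, hac⟩ := Nat.find_spec (hex a s hs)
        obtain ⟨c', hc', hbc⟩ := Nat.find_spec (hex b s hs)
        have hcc : c = c' := hg (by rw [hc, hc', ← h])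
        subst hcc
        calc dist a b ≤ max (dist a c) (dist c b) := hult a c b
          _ < s := max_lt hac (by rwa [dist_comm])
      · intro h
        have key : ∀ n, (∃ c : X, g c = n ∧ dist a c < s) ↔
            (∃ c : X, g c = n ∧ dist b c < s) := by
          intro n
          constructor
          · rintro ⟨c, hc, hd⟩
            exact ⟨c, hc, lt_of_le_of_lt (hult b a c) (max_lt (by rwa [dist_comm]) hd)⟩
          · rintro ⟨c, hc, hd⟩
            exact ⟨c, hc, lt_of_le_of_lt (hult a b c) (max_lt h hd)⟩
        exact le_antisymm
          (Nat.find_min' _ ((key _).mpr (Nat.find_spec (hex b s hs))))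
          (Nat.find_min' _ ((key _).mp (Nat.find_spec (hex a s hs))))
    set F : X → S → ℕ := fun a s =>
      if (s : ℝ) ∈ D then Nat.find (hex a s (hpos s.2)) else 0 with hF
    have hsupp : ∀ a : X, (Function.support (F a)).Finite := by
      intro a
      apply Set.Finite.subset (hDfin.preimage (Subtype.val_injective.injOn))
      intro s hs
      by_contra hsD
      exact hs (if_neg hsD)
    refine ⟨fun a => ⟨F a, hsupp a⟩, ?_⟩
    intro a b
    rcases eq_or_ne a b with rfl | hab
    · have hempty : {s : S | F a s ≠ F a s} = ∅ := by ext s; simp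
      show sSup (Subtype.val '' {s : S | F a s ≠ F a s}) = dist a a
      rw [hempty]
      simp [Real.sSup_empty]
    · have hd0 : dist a b ≠ 0 := fun h => hab (dist_eq_zero.mp h)
      have hdD : dist a b ∈ D := ⟨hd0, a, b, rfl⟩
      have hiff : ∀ s : S, F a s ≠ F b s ↔ ((s : ℝ) ∈ D ∧ (s : ℝ) ≤ dist a b) := by
        intro s
        by_cases hsD : (s : ℝ) ∈ D
        · simp only [hF, if_pos hsD]
          rw [Ne, hfind a b s (hpos s.2)]
          simp [hsD, not_lt]
        · simp [hF, if_neg hsD, hsD]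
      have himg : Subtype.val '' {s : S | F a s ≠ F b s} =
          {t : ℝ | t ∈ D ∧ t ≤ dist a b} := by
        ext t
        constructor
        · rintro ⟨s, hs, rfl⟩
          exact (hiff s).mp hs
        · rintro ⟨htD, htle⟩
          exact ⟨⟨t, hDS htD⟩, (hiff _).mpr ⟨htD, htle⟩, rfl⟩
      show sSup (Subtype.val '' {s : S | F a s ≠ F b s}) = dist a b
      rw [himg]
      have hmemset : dist a b ∈ {t : ℝ | t ∈ D ∧ t ≤ dist a b} := ⟨hdD, le_refl _⟩
      exact le_antisymm (csSup_le ⟨_, hmemset⟩ fun t ht => ht.2)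
        (le_csSup ⟨dist a b, fun t ht => ht.2⟩ hmemset)
end

section
/- Let S ⊆ (0,∞) be a countable set of positive reals, let S' ⊆ S be finite, and let f : Q_S → Q_{S'} be the map sending x to its restriction to S' (equivalently, f(x) = 1_{S'}·x, which vanishes outside S'). Then: (a) for all x,y ∈ Q_S, if d(x,y) ∈ S' then d(f(x),f(y)) = d(x,y); and (b) for every isometric copy Q of Q_S inside Q_S, the image f''Q is an isometric copy of Q_{S'} inside Q_{S'}. -/
/-- The restriction map `Q_S → Q_{S'}` for `S' ⊆ S` finite, sending `x` to
`1_{S'} · x`. -/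
def QSrestrict (S S' : Set ℝ) (hsub : S' ⊆ S) (hfin : S'.Finite)
    (x : QS S) : QS S' :=
  ⟨fun t => x.1 ⟨t.1, hsub t.2⟩, by
    haveI := hfin.to_subtype
    exact Set.toFinite _⟩


namespace Stmt11Aux

noncomputable local instance (T : Set ℝ) : DecidableEq (QS T) := Classical.decEq _

variable {T : Set ℝ}

lemma dset_finite (x y : QS T) : {s : T | x.1 s ≠ y.1 s}.Finite := by
  apply (x.2.union y.2).subset
  intro s hs
  by_contra h
  simp only [Set.mem_union, Function.mem_support, not_or, not_not] at h
  exact hs (h.1.trans h.2.symm)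

lemma qdist_self (x : QS T) : qdist T x x = 0 := by
  simp [qdist, Real.sSup_empty]

lemma qdist_comm (x y : QS T) : qdist T x y = qdist T y x := by
  unfold qdist
  congr 1
  ext r
  simp [ne_comm]

lemma le_qdist {x y : QS T} {t : T} (h : x.1 t ≠ y.1 t) : (t : ℝ) ≤ qdist T x y :=
  le_csSup ((dset_finite x y).image _).bddAbove ⟨t, h, rfl⟩

lemma exists_eq {x y : QS T} (h : x ≠ y) :
    ∃ s : T, (s : ℝ) = qdist T x y ∧ x.1 s ≠ y.1 s := by
  have hne : {s : T | x.1 s ≠ y.1 s}.Nonempty := by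
    by_contra hc
    rw [Set.not_nonempty_iff_eq_empty] at hc
    apply h
    apply Subtype.ext; funext s
    by_contra hs
    have : s ∈ ({s : T | x.1 s ≠ y.1 s} : Set T) := hs
    rw [hc] at this
    exact this
  have := (hne.image (Subtype.val)).csSup_mem ((dset_finite x y).image _)
  obtain ⟨s, hs, heq⟩ := this
  exact ⟨s, heq, hs⟩

lemma qdist_mem (hpos : T ⊆ Set.Ioi 0) {x y : QS T} (h : x ≠ y) : qdist T x y ∈ T := by
  obtain ⟨s, hs, -⟩ := exists_eq h
  exact hs ▸ s.2

lemma qdist_pos (hpos : T ⊆ Set.Ioi 0) {x y : QS T} (h : x ≠ y) : 0 < qdist T x y :=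
  hpos (qdist_mem hpos h)

lemma qdist_nonneg (hpos : T ⊆ Set.Ioi 0) (x y : QS T) : 0 ≤ qdist T x y := by
  by_cases h : x = y
  · rw [h, qdist_self]
  · exact (qdist_pos hpos h).le

lemma eq_of_qdist_eq_zero (hpos : T ⊆ Set.Ioi 0) {x y : QS T} (h : qdist T x y = 0) : x = y := by
  by_contra hc
  exact absurd h (qdist_pos hpos hc).ne'

lemma qdist_le {x y : QS T} {r : ℝ} (hr : 0 ≤ r)
    (H : ∀ t : T, x.1 t ≠ y.1 t → (t : ℝ) ≤ r) : qdist T x y ≤ r := by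
  apply Real.sSup_le _ hr
  rintro v ⟨t, ht, rfl⟩
  exact H t ht

lemma ultra (hpos : T ⊆ Set.Ioi 0) (x y z : QS T) :
    qdist T x z ≤ max (qdist T x y) (qdist T y z) := by
  apply Real.sSup_le
  · rintro v ⟨t, ht, rfl⟩
    rcases ne_or_eq (x.1 t) (y.1 t) with h | h
    · exact le_max_of_le_left (le_qdist h)
    · exact le_max_of_le_right (le_qdist (h ▸ ht))
  · exact le_max_of_le_left (qdist_nonneg hpos x y)

lemma isoceles (hpos : T ⊆ Set.Ioi 0) {x y z : QS T} (h : qdist T x y < qdist T y z) :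
    qdist T x z = qdist T y z := by
  have h1 : qdist T x z ≤ qdist T y z :=
    (ultra hpos x y z).trans (by rw [max_eq_right h.le])
  have h2 : qdist T y z ≤ qdist T x z := by
    have := ultra hpos y x z
    rw [qdist_comm y x] at this
    rcases max_cases (qdist T x y) (qdist T x z) with ⟨he, _⟩ | ⟨he, _⟩
    · rw [he] at this; exact absurd (this.trans_lt h) (lt_irrefl _)
    · rwa [he] at this
  exact le_antisymm h1 h2

section Restrict
variable {S S' : Set ℝ} (hpos : S ⊆ Set.Ioi 0) (hsub : S' ⊆ S) (hfin : S'.Finite)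
include hpos

/-- Part (a). -/
lemma restrict_eq (x y : QS S) (h : qdist S x y ∈ S') :
    qdist S' (QSrestrict S S' hsub hfin x) (QSrestrict S S' hsub hfin y) = qdist S x y := by
  have hxy : x ≠ y := by
    rintro rfl
    rw [qdist_self] at h
    exact absurd (Set.mem_Ioi.mp (hpos (hsub h))) (lt_irrefl 0)
  obtain ⟨s, hs, hne⟩ := exists_eq hxy
  apply le_antisymm
  · apply qdist_le (qdist_nonneg hpos x y)
    intro t ht
    exact le_qdist (x := x) (y := y) (t := ⟨t.1, hsub t.2⟩) ht
  · have : (QSrestrict S S' hsub hfin x).1 ⟨qdist S x y, h⟩ ≠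
        (QSrestrict S S' hsub hfin y).1 ⟨qdist S x y, h⟩ := by
      have hseq : s = (⟨qdist S x y, hsub h⟩ : S) := Subtype.ext hs
      simpa [QSrestrict, ← hseq] using hne
    exact le_qdist this

lemma restrict_le (x y : QS S) :
    qdist S' (QSrestrict S S' hsub hfin x) (QSrestrict S S' hsub hfin y) ≤ qdist S x y := by
  apply qdist_le (qdist_nonneg hpos x y)
  intro t ht
  exact le_qdist (x := x) (y := y) (t := ⟨t.1, hsub t.2⟩) ht

end Restrict

/-- `x` updated at coordinate `s` to value `k`. -/
noncomputable def upd (x : QS T) (s : T) (k : ℕ) : QS T :=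
  ⟨Function.update x.1 s k, by
    apply (x.2.union (Set.finite_singleton s)).subset
    intro t ht
    rcases eq_or_ne t s with rfl | h
    · exact Or.inr rfl
    · left; rwa [Function.mem_support, Function.update_of_ne h] at ht⟩

lemma qdist_upd_le (hpos : T ⊆ Set.Ioi 0) (x : QS T) (s : T) (k : ℕ) :
    qdist T x (upd x s k) ≤ (s : ℝ) := by
  apply qdist_le (le_of_lt (hpos s.2))
  intro t ht
  rcases eq_or_ne t s with rfl | h
  · exact le_refl _
  · rw [show (upd x s k).1 t = x.1 t from Function.update_of_ne h _ _] at ht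
    exact absurd rfl ht

lemma qdist_upd_upd (hpos : T ⊆ Set.Ioi 0) (x : QS T) (s : T) {k j : ℕ} (h : k ≠ j) :
    qdist T (upd x s k) (upd x s j) = (s : ℝ) := by
  apply le_antisymm
  · apply qdist_le (le_of_lt (hpos s.2))
    intro t ht
    rcases eq_or_ne t s with rfl | hne
    · exact le_refl _
    · rw [show (upd x s k).1 t = x.1 t from Function.update_of_ne hne _ _,
        show (upd x s j).1 t = x.1 t from Function.update_of_ne hne _ _] at ht
      exact absurd rfl ht
  · apply le_qdist (t := s)
    rw [show (upd x s k).1 s = k from Function.update_self _ _ _,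
      show (upd x s j).1 s = j from Function.update_self _ _ _]
    exact h

/-- The richness property used for back-and-forth. -/
def Star (T : Set ℝ) (Z : Set (QS T)) : Prop :=
  ∀ y ∈ Z, ∀ s ∈ T, ∃ g : ℕ → QS T, (∀ k, g k ∈ Z) ∧ (∀ k, qdist T y (g k) ≤ s) ∧
    ∀ k j, k ≠ j → qdist T (g k) (g j) = s

lemma star_univ (hpos : T ⊆ Set.Ioi 0) : Star T Set.univ := by
  intro y _ s hs
  exact ⟨fun k => upd y ⟨s, hs⟩ k, fun k => trivial,
    fun k => qdist_upd_le hpos y ⟨s, hs⟩ k,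
    fun k j h => qdist_upd_upd hpos y ⟨s, hs⟩ h⟩

lemma star_image {S S' : Set ℝ} (hpos : S ⊆ Set.Ioi 0) (hsub : S' ⊆ S) (hfin : S'.Finite)
    (e : QS S → QS S) (he : ∀ x y, qdist S (e x) (e y) = qdist S x y) :
    Star S' (QSrestrict S S' hsub hfin '' Set.range e) := by
  rintro y ⟨q, ⟨x, rfl⟩, rfl⟩ s hs
  refine ⟨fun k => QSrestrict S S' hsub hfin (e (upd x ⟨s, hsub hs⟩ k)),
    fun k => ⟨_, ⟨_, rfl⟩, rfl⟩, fun k => ?_, fun k j h => ?_⟩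
  · calc qdist S' _ _ ≤ qdist S (e x) (e (upd x ⟨s, hsub hs⟩ k)) :=
          restrict_le hpos hsub hfin _ _
      _ = qdist S x (upd x ⟨s, hsub hs⟩ k) := he _ _
      _ ≤ s := qdist_upd_le hpos x ⟨s, hsub hs⟩ k
  · have h1 : qdist S (e (upd x ⟨s, hsub hs⟩ k)) (e (upd x ⟨s, hsub hs⟩ j)) = s := by
      rw [he]; exact qdist_upd_upd hpos x ⟨s, hsub hs⟩ h
    rw [restrict_eq hpos hsub hfin _ _ (by rw [h1]; exact hs), h1]

/-- The key extension lemma for back-and-forth. -/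
lemma ext_lemma (hpos : T ⊆ Set.Ioi 0) {Z : Set (QS T)} (hZ : Z.Nonempty)
    (hstar : Star T Z) (P : Finset (QS T × QS T))
    (hP : ∀ u ∈ P, ∀ v ∈ P, qdist T u.1 v.1 = qdist T u.2 v.2)
    (hPZ : ∀ u ∈ P, u.2 ∈ Z) (a : QS T) :
    ∃ z ∈ Z, ∀ v ∈ P, qdist T a v.1 = qdist T z v.2 := by
  by_cases hmem : ∃ u ∈ P, u.1 = a
  · obtain ⟨u, hu, hua⟩ := hmem
    exact ⟨u.2, hPZ u hu, fun v hv => by rw [← hua]; exact hP u hu v hv⟩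
  push_neg at hmem
  rcases P.eq_empty_or_nonempty with rfl | hPne
  · obtain ⟨z, hz⟩ := hZ
    exact ⟨z, hz, fun v hv => absurd hv (Finset.notMem_empty v)⟩
  obtain ⟨u₀, hu₀, hmin⟩ := P.exists_min_image (fun u => qdist T a u.1) hPne
  set t := qdist T a u₀.1 with ht_def
  have hat : a ≠ u₀.1 := fun h => hmem u₀ hu₀ h.symm
  have htT : t ∈ T := qdist_mem hpos hat
  obtain ⟨g, hgZ, hgle, hgpair⟩ := hstar u₀.2 (hPZ u₀ hu₀) t htT
  have hbadfin : (⋃ v ∈ P, {k : ℕ | qdist T (g k) v.2 < t}).Finite := by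
    apply Set.Finite.biUnion P.finite_toSet
    intro v _
    apply Set.Subsingleton.finite
    intro k hk j hj
    simp only [Set.mem_setOf_eq] at hk hj
    by_contra hkj
    have hkj' := hgpair k j hkj
    have hle := (ultra hpos (g k) v.2 (g j)).trans_lt
      (max_lt hk (by rw [qdist_comm]; exact hj))
    rw [hkj'] at hle
    exact absurd hle (lt_irrefl t)
  obtain ⟨k, hk⟩ : ∃ k, k ∉ ⋃ v ∈ P, {k : ℕ | qdist T (g k) v.2 < t} := by
    have := hbadfin.infinite_compl
    obtain ⟨k, hk⟩ := this.nonempty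
    exact ⟨k, hk⟩
  refine ⟨g k, hgZ k, fun v hv => ?_⟩
  have hknb : ¬ qdist T (g k) v.2 < t := by
    intro hlt
    exact hk (Set.mem_biUnion hv hlt)
  have hgu : qdist T (g k) u₀.2 ≤ t := by rw [qdist_comm]; exact hgle k
  rcases eq_or_lt_of_le (hmin v hv) with heq | hlt
  · have huv : qdist T u₀.1 v.1 ≤ t := by
      refine (ultra hpos u₀.1 a v.1).trans ?_
      rw [max_le_iff]
      exact ⟨le_of_eq (qdist_comm u₀.1 a), le_of_eq heq.symm⟩
    have hzv : qdist T (g k) v.2 ≤ t := by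
      refine (ultra hpos (g k) u₀.2 v.2).trans ?_
      rw [max_le_iff]
      exact ⟨hgu, by rw [← hP u₀ hu₀ v hv]; exact huv⟩
    rw [← heq]
    exact (le_antisymm hzv (not_lt.mp hknb)).symm
  · have h1 : qdist T u₀.1 v.1 = qdist T a v.1 := by
      apply isoceles hpos
      rwa [qdist_comm]
    have h2 : qdist T u₀.2 v.2 = qdist T a v.1 := by rw [← hP u₀ hu₀ v hv]; exact h1
    have h3 : qdist T (g k) u₀.2 < qdist T u₀.2 v.2 := by
      rw [h2]; exact lt_of_le_of_lt hgu hlt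
    rw [isoceles hpos h3, h2]

/-- A finite partial isometry into `Y`. -/
def Good (T : Set ℝ) (Y : Set (QS T)) (P : Finset (QS T × QS T)) : Prop :=
  (∀ u ∈ P, ∀ v ∈ P, qdist T u.1 v.1 = qdist T u.2 v.2) ∧ ∀ u ∈ P, u.2 ∈ Y

lemma good_empty (Y : Set (QS T)) : Good T Y ∅ :=
  ⟨fun u hu => absurd hu (Finset.notMem_empty u), fun u hu => absurd hu (Finset.notMem_empty u)⟩

lemma good_insert {Y : Set (QS T)} {P : Finset (QS T × QS T)} (hP : Good T Y P)
    {a z : QS T} (hzY : z ∈ Y) (hz : ∀ v ∈ P, qdist T a v.1 = qdist T z v.2) :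
    Good T Y (insert (a, z) P) := by
  constructor
  · intro u hu w hw
    rcases Finset.mem_insert.mp hu with rfl | hu <;>
      rcases Finset.mem_insert.mp hw with rfl | hw
    · simp [qdist_self]
    · exact hz w hw
    · show qdist T u.1 a = qdist T u.2 z
      rw [qdist_comm, qdist_comm u.2 z]
      exact hz u hu
    · exact hP.1 u hu w hw
  · intro u hu
    rcases Finset.mem_insert.mp hu with rfl | hu
    · exact hzY
    · exact hP.2 u hu

lemma good_extend_fst (hpos : T ⊆ Set.Ioi 0) {Y : Set (QS T)} (hY : Y.Nonempty)
    (hstar : Star T Y) {P : Finset (QS T × QS T)} (hP : Good T Y P) (a : QS T) :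
    ∃ z, Good T Y (insert (a, z) P) := by
  obtain ⟨z, hzY, hz⟩ := ext_lemma hpos hY hstar P hP.1 hP.2 a
  exact ⟨z, good_insert hP hzY hz⟩

lemma good_extend_snd (hpos : T ⊆ Set.Ioi 0) {Y : Set (QS T)}
    {P : Finset (QS T × QS T)} (hP : Good T Y P) {z : QS T} (hzY : z ∈ Y) :
    ∃ a, Good T Y (insert (a, z) P) := by
  obtain ⟨a, -, ha⟩ := ext_lemma hpos (⟨z, trivial⟩ : (Set.univ : Set (QS T)).Nonempty)
    (star_univ hpos)
    (P.image Prod.swap) (by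
      intro p hp q hq
      obtain ⟨p', hp', rfl⟩ := Finset.mem_image.mp hp
      obtain ⟨q', hq', rfl⟩ := Finset.mem_image.mp hq
      exact (hP.1 p' hp' q' hq').symm)
    (fun p _ => Set.mem_univ _) z
  refine ⟨a, good_insert hP hzY ?_⟩
  intro v hv
  have := ha v.swap (Finset.mem_image_of_mem _ hv)
  simp only [Prod.fst_swap, Prod.snd_swap] at this
  exact this.symm

/-- Back-and-forth: a nonempty set satisfying `Star` is the range of a
distance-preserving injection of the whole space. -/
theorem copy_of_star (hpos : T ⊆ Set.Ioi 0) (hcnt : Countable (QS T))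
    {Y : Set (QS T)} (hY : Y.Nonempty) (hstar : Star T Y) :
    ∃ e : QS T → QS T, Function.Injective e ∧ Set.range e = Y ∧
      ∀ a b, qdist T (e a) (e b) = qdist T a b := by
  classical
  have hne : Nonempty (QS T) := ⟨hY.some⟩
  obtain ⟨u, hu⟩ := exists_surjective_nat (QS T)
  haveI : Nonempty Y := hY.to_subtype
  haveI : Countable Y := Subtype.countable
  obtain ⟨v0, hv0⟩ := exists_surjective_nat Y
  set v : ℕ → QS T := fun n => (v0 n).1 with hv_def
  have hvY : ∀ n, v n ∈ Y := fun n => (v0 n).2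
  have hvsurj : ∀ z ∈ Y, ∃ n, v n = z := fun z hz =>
    (hv0 ⟨z, hz⟩).imp fun n h => congrArg Subtype.val h
  choose fA hfA using fun (p : {P : Finset (QS T × QS T) // Good T Y P}) (a : QS T) =>
    good_extend_fst hpos hY hstar p.2 a
  choose fB hfB using fun (p : {P : Finset (QS T × QS T) // Good T Y P}) (n : ℕ) =>
    good_extend_snd hpos p.2 (hvY n)
  let step : {P : Finset (QS T × QS T) // Good T Y P} → ℕ →
      {P : Finset (QS T × QS T) // Good T Y P} := fun p n =>
    let p1 : {P : Finset (QS T × QS T) // Good T Y P} :=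
      ⟨insert (u n, fA p (u n)) p.1, hfA p (u n)⟩
    ⟨insert (fB p1 n, v n) p1.1, hfB p1 n⟩
  let F : ℕ → {P : Finset (QS T × QS T) // Good T Y P} := fun n =>
    Nat.rec ⟨∅, good_empty Y⟩ (fun n p => step p n) n
  have hFsucc : ∀ n, (F (n + 1)).1 =
      insert (fB ⟨insert (u n, fA (F n) (u n)) (F n).1, hfA (F n) (u n)⟩ n, v n)
        (insert (u n, fA (F n) (u n)) (F n).1) := fun n => rfl
  have hsub : ∀ n, (F n).1 ⊆ (F (n + 1)).1 := by
    intro n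
    rw [hFsucc n]
    exact (Finset.subset_insert _ _).trans (Finset.subset_insert _ _)
  have hmono : ∀ m n, m ≤ n → (F m).1 ⊆ (F n).1 := by
    intro m n h
    induction h with
    | refl => exact subset_rfl
    | step h ih => exact ih.trans (hsub _)
  have hmemu : ∀ n, (u n, fA (F n) (u n)) ∈ (F (n + 1)).1 := fun n => by
    rw [hFsucc n]
    exact Finset.mem_insert_of_mem (Finset.mem_insert_self _ _)
  have hmemv : ∀ n,
      (fB ⟨insert (u n, fA (F n) (u n)) (F n).1, hfA (F n) (u n)⟩ n, v n) ∈ (F (n + 1)).1 :=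
    fun n => by rw [hFsucc n]; exact Finset.mem_insert_self _ _
  have hkey : ∀ p q : QS T × QS T, ∀ m n, p ∈ (F m).1 → q ∈ (F n).1 →
      qdist T p.1 q.1 = qdist T p.2 q.2 := by
    intro p q m n hp hq
    exact (F (max m n)).2.1 p (hmono m _ (le_max_left m n) hp)
      q (hmono n _ (le_max_right m n) hq)
  have total : ∀ a : QS T, ∃ z, ∃ m, (a, z) ∈ (F m).1 := by
    intro a
    obtain ⟨n, rfl⟩ := hu a
    exact ⟨_, n + 1, hmemu n⟩
  choose e me he using total
  have hdist : ∀ a b, qdist T (e a) (e b) = qdist T a b := fun a b =>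
    (hkey (a, e a) (b, e b) _ _ (he a) (he b)).symm
  refine ⟨e, ?_, ?_, hdist⟩
  · intro a b hab
    exact eq_of_qdist_eq_zero hpos (by rw [← hdist a b, hab, qdist_self])
  · apply Set.eq_of_subset_of_subset
    · rintro z ⟨a, rfl⟩
      exact (F (me a)).2.2 _ (he a)
    · intro z hz
      obtain ⟨n, rfl⟩ := hvsurj z hz
      refine ⟨fB ⟨insert (u n, fA (F n) (u n)) (F n).1, hfA (F n) (u n)⟩ n, ?_⟩
      have h0 := hkey (fB ⟨insert (u n, fA (F n) (u n)) (F n).1, hfA (F n) (u n)⟩ n, v n)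
        (fB ⟨insert (u n, fA (F n) (u n)) (F n).1, hfA (F n) (u n)⟩ n,
         e (fB ⟨insert (u n, fA (F n) (u n)) (F n).1, hfA (F n) (u n)⟩ n))
        (n + 1) (me _) (hmemv n) (he _)
      rw [qdist_self] at h0
      exact (eq_of_qdist_eq_zero hpos h0.symm).symm

end Stmt11Aux

/-- The restriction map `f : Q_S → Q_{S'}` preserves all
distances lying in `S'`, and maps any isometric copy of `Q_S` inside `Q_S`
onto an isometric copy of `Q_{S'}` inside `Q_{S'}`. -/
theorem stmt11 (S S' : Set ℝ) (hpos : S ⊆ Set.Ioi 0) (hcount : S.Countable)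
    (hsub : S' ⊆ S) (hfin : S'.Finite) :
    (∀ x y : QS S, qdist S x y ∈ S' →
      qdist S' (QSrestrict S S' hsub hfin x) (QSrestrict S S' hsub hfin y) =
        qdist S x y) ∧
    (∀ Q : Set (QS S), IsCopyOfQS S Q →
      IsCopyOfQS S' (QSrestrict S S' hsub hfin '' Q)) := by
  have hpos' : S' ⊆ Set.Ioi 0 := fun t ht => hpos (hsub ht)
  constructor
  · exact fun x y h => Stmt11Aux.restrict_eq hpos hsub hfin x y h
  · intro Q hQ
    obtain ⟨e, -, rfl, he⟩ := hQ
    haveI := hfin.to_subtype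
    have hcnt : Countable (QS S') := by unfold QS; infer_instance
    have hY : (QSrestrict S S' hsub hfin '' Set.range e).Nonempty := by
      refine ⟨QSrestrict S S' hsub hfin (e ⟨fun _ => 0, ?_⟩),
        Set.mem_image_of_mem _ (Set.mem_range_self _)⟩
      have h0 : Function.support (fun _ : S => (0 : ℕ)) = ∅ :=
        Function.support_eq_empty_iff.mpr rfl
      rw [h0]
      exact Set.finite_empty
    have hstar := Stmt11Aux.star_image hpos hsub hfin e he
    obtain ⟨e', h1, h2, h3⟩ := Stmt11Aux.copy_of_star hpos' hcnt hY hstar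
    exact ⟨e', h1, h2, h3⟩
end

section
/- Let S ⊆ (0,∞) be an infinite countable set of positive reals, and suppose (b_n)_{n ∈ ℕ} is a family of pairwise disjoint metric balls of Q_S covering Q_S whose corresponding radii (r_n)_{n ∈ ℕ} form a strictly decreasing sequence converging to 0. Define f : Q_S → ℕ by f(x) = n if and only if x ∈ b_n. Then for every isometric copy X of Q_S inside Q_S, the restriction of f to X is neither uniformly continuous (with ℕ discrete) nor injective; in particular it is neither constant nor injective on X. -/
open scoped Classical

namespace Stmt12Aux

variable {S : Set ℝ}

lemma differ_finite (x y : QS S) : {s : S | x.1 s ≠ y.1 s}.Finite := by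
  apply Set.Finite.subset (x.2.union y.2)
  intro s hs
  by_contra h
  simp only [Set.mem_union, Function.mem_support, not_or, not_not] at h
  exact hs (h.1.trans h.2.symm)

lemma bdd (x y : QS S) : BddAbove (Subtype.val '' {s : S | x.1 s ≠ y.1 s}) :=
  ((differ_finite x y).image _).bddAbove

lemma qdist_le (x y : QS S) {R : ℝ} (hR : 0 ≤ R)
    (h : ∀ s : S, x.1 s ≠ y.1 s → (s : ℝ) ≤ R) : qdist S x y ≤ R := by
  apply Real.sSup_le _ hR
  rintro v ⟨s, hs, rfl⟩
  exact h s hs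

lemma le_qdist {x y : QS S} {s : S} (h : x.1 s ≠ y.1 s) : (s : ℝ) ≤ qdist S x y :=
  le_csSup (bdd x y) ⟨s, h, rfl⟩

lemma qdist_comm (x y : QS S) : qdist S x y = qdist S y x := by
  unfold qdist
  congr 1
  ext s
  simp [ne_comm]

lemma qdist_self (x : QS S) : qdist S x x = 0 := by
  unfold qdist
  simp [Real.sSup_empty]

lemma ultra {a c d : QS S} {R : ℝ} (hR : 0 ≤ R)
    (h1 : qdist S c a ≤ R) (h2 : qdist S c d ≤ R) : qdist S a d ≤ R := by
  apply qdist_le _ _ hR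
  intro s hs
  rcases ne_or_eq (c.1 s) (a.1 s) with h | h
  · exact (le_qdist h).trans h1
  · exact (le_qdist (show c.1 s ≠ d.1 s from h ▸ hs)).trans h2

noncomputable def bump (z : QS S) (t : S) (k : ℕ) : QS S :=
  ⟨fun u => if u = t then k else z.1 u, by
    apply Set.Finite.subset (z.2.union (Set.finite_singleton t))
    intro u hu
    simp only [Function.mem_support] at hu
    by_cases h : u = t
    · exact Or.inr h
    · simp only [if_neg h] at hu
      exact Or.inl hu⟩

lemma qdist_bump_bump (z : QS S) (t : S) {k k' : ℕ} (h : k ≠ k') :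
    qdist S (bump z t k) (bump z t k') = t := by
  have hset : {s : S | (bump z t k).1 s ≠ (bump z t k').1 s} = {t} := by
    ext u
    simp only [bump, Set.mem_setOf_eq, Set.mem_singleton_iff]
    by_cases hu : u = t <;> simp [hu, h]
  unfold qdist
  rw [hset, Set.image_singleton, csSup_singleton]

lemma qdist_bump (z : QS S) (t : S) {k : ℕ} (h : z.1 t ≠ k) :
    qdist S z (bump z t k) = t := by
  have hset : {s : S | z.1 s ≠ (bump z t k).1 s} = {t} := by
    ext u
    simp only [bump, Set.mem_setOf_eq, Set.mem_singleton_iff]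
    by_cases hu : u = t <;> simp [hu, h]
  unfold qdist
  rw [hset, Set.image_singleton, csSup_singleton]

noncomputable def zeroQS (S : Set ℝ) : QS S :=
  ⟨fun _ => 0, by simp [Function.support]⟩

end Stmt12Aux

open Stmt12Aux

/-- If `(b n)` is a disjoint cover of `Q_S` by metric balls
whose radii `(r n)` strictly decrease to `0` and `f x = n ↔ x ∈ b n`, then on
every isometric copy `X` of `Q_S` inside `Q_S` the map `f` is neither
uniformly continuous (into discrete `ℕ`) nor injective; in particular it is
neither constant nor injective on `X`. -/
theorem stmt12 (S : Set ℝ) (hpos : S ⊆ Set.Ioi 0) (hcount : S.Countable)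
    (hinf : S.Infinite) (b : ℕ → Set (QS S)) (r : ℕ → ℝ)
    (hball : ∀ n, IsBall S (b n) (r n))
    (hdisj : ∀ m n : ℕ, m ≠ n → Disjoint (b m) (b n))
    (hcover : (⋃ n, b n) = Set.univ)
    (hanti : StrictAnti r)
    (hlim : Filter.Tendsto r Filter.atTop (nhds 0))
    (f : QS S → ℕ) (hf : ∀ (x : QS S) (n : ℕ), f x = n ↔ x ∈ b n) :
    ∀ X : Set (QS S), IsCopyOfQS S X →
      (¬ ∃ δ > (0:ℝ), ∀ x ∈ X, ∀ y ∈ X, qdist S x y < δ → f x = f y) ∧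
      (¬ Set.InjOn f X) ∧
      (¬ ∃ c : ℕ, ∀ x ∈ X, f x = c) := by
  intro X hX
  obtain ⟨e, he_inj, he_range, he_iso⟩ := hX
  have heX : ∀ z : QS S, e z ∈ X := fun z => he_range ▸ ⟨z, rfl⟩
  have hr_nonneg : ∀ n, 0 ≤ r n := fun n => ((hball n).1).elim (fun h => (hpos h).le) Eq.ge
  have hr_pos : ∀ n, 0 < r n := fun n =>
    lt_of_le_of_lt (hr_nonneg (n + 1)) (hanti (Nat.lt_succ_self n))
  have hr_mem : ∀ n, r n ∈ S := fun n => ((hball n).1).resolve_right (ne_of_gt (hr_pos n))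
  -- membership in ball b n from distance bound
  have hmem_ball : ∀ n : ℕ, ∀ x, x ∈ b n ↔ f x = n := fun n x => (hf x n).symm
  -- main claim A : not "uniformly continuous"
  have hA : ¬ ∃ δ > (0:ℝ), ∀ x ∈ X, ∀ y ∈ X, qdist S x y < δ → f x = f y := by
    rintro ⟨δ, hδ, H⟩
    obtain ⟨N, hN⟩ := (hlim.eventually (gt_mem_nhds hδ)).exists
    set s : ℝ := r N with hs_def
    have hsS : s ∈ S := hr_mem N
    have hs_pos : 0 < s := hr_pos N
    obtain ⟨M, hM⟩ := (hlim.eventually (gt_mem_nhds hs_pos)).exists_forall_of_atTop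
    -- Claim C: for every z, f (e z) < M
    have hC : ∀ z : QS S, f (e z) < M := by
      intro z
      by_contra hge
      push_neg at hge
      set c := f (e z) with hc
      obtain ⟨-, xc, hbc⟩ := hball c
      have hez : e z ∈ b c := (hf (e z) c).mp rfl
      set z' := bump z ⟨s, hsS⟩ (z.1 ⟨s, hsS⟩ + 1) with hz'
      have hdzz' : qdist S z z' = s := qdist_bump z ⟨s, hsS⟩ (Nat.ne_of_lt (Nat.lt_succ_self _))
      have hfeq : f (e z) = f (e z') := by
        apply H (e z) (heX z) (e z') (heX z')
        rw [he_iso, hdzz']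
        exact hN
      have hez' : e z' ∈ b c := (hf (e z') c).mp hfeq.symm
      rw [hbc] at hez hez'
      have : qdist S (e z) (e z') ≤ r c := ultra (hr_nonneg c) hez hez'
      rw [he_iso, hdzz'] at this
      exact absurd (lt_of_le_of_lt this (hM c hge)) (lt_irrefl s)
    have hM_pos : 0 < M := Nat.pos_of_ne_zero (fun h => by
      have := hC (zeroQS S); omega)
    -- Claim D: every t ∈ S satisfies t ≤ r 0
    have hD : ∀ t ∈ S, t ≤ r 0 := by
      intro t ht
      set P : ℕ → QS S := fun i => bump (zeroQS S) ⟨t, ht⟩ i with hP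
      have hg : ∀ i : Fin (M + 1), f (e (P i)) < M := fun i => hC (P i)
      obtain ⟨i, j, hij, hfij⟩ := Fintype.exists_ne_map_eq_of_card_lt
        (fun i : Fin (M + 1) => (⟨f (e (P i)), hg i⟩ : Fin M)) (by simp)
      have hfij' : f (e (P i)) = f (e (P j)) := congrArg Fin.val hfij
      set n := f (e (P i)) with hn
      obtain ⟨-, xn, hbn⟩ := hball n
      have h1 : e (P i) ∈ b n := (hf _ n).mp rfl
      have h2 : e (P j) ∈ b n := (hf _ n).mp hfij'.symm
      rw [hbn] at h1 h2
      have h3 : qdist S (e (P i)) (e (P j)) ≤ r n := ultra (hr_nonneg n) h1 h2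
      rw [he_iso] at h3
      have h4 : qdist S (P i) (P j) = t :=
        qdist_bump_bump (zeroQS S) ⟨t, ht⟩ (fun h => hij (Fin.ext h))
      rw [h4] at h3
      exact h3.trans (hanti.antitone (Nat.zero_le n))
    -- b 0 = univ, contradicting disjointness with nonempty b 1
    obtain ⟨-, x0, hb0⟩ := hball 0
    obtain ⟨-, x1, hb1⟩ := hball 1
    have hx1b1 : x1 ∈ b 1 := by rw [hb1]; simpa [qdist_self] using hr_nonneg 1
    have hx1b0 : x1 ∈ b 0 := by
      rw [hb0]
      exact qdist_le x0 x1 (hr_nonneg 0) (fun u _ => hD u u.2)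
    exact Set.disjoint_left.mp (hdisj 0 1 (by norm_num)) hx1b0 hx1b1
  refine ⟨hA, ?_, ?_⟩
  · -- not injective on X
    intro hinj
    set z0 := zeroQS S with hz0
    set c0 := f (e z0) with hc0
    obtain ⟨-, xc, hbc⟩ := hball c0
    have hs0S : r c0 ∈ S := hr_mem c0
    set z1 := bump z0 ⟨r c0, hs0S⟩ 1 with hz1
    have hd01 : qdist S z0 z1 = r c0 := qdist_bump z0 ⟨r c0, hs0S⟩ (by simp [hz0, zeroQS])
    have hez0 : e z0 ∈ b c0 := (hf (e z0) c0).mp rfl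
    rw [hbc] at hez0
    have hez1 : qdist S xc (e z1) ≤ r c0 := by
      apply ultra (hr_nonneg c0) (by rwa [qdist_comm])
      rw [he_iso, hd01]
    have hfz1 : f (e z1) = c0 := (hf (e z1) c0).mpr (by rw [hbc]; exact hez1)
    have heq : e z0 = e z1 := hinj (heX z0) (heX z1) hfz1.symm
    have : qdist S (e z0) (e z1) = 0 := heq ▸ qdist_self (e z0)
    rw [he_iso, hd01] at this
    exact absurd this (ne_of_gt (hr_pos c0))
  · -- not constant on X
    rintro ⟨c, hc⟩
    exact hA ⟨1, one_pos, fun x hx y hy _ => (hc x hx).trans (hc y hy).symm⟩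
end
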